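/- arXiv:2208.12982 — 5 statements merged into one kernel-verified Lean document; each statement's English description precedes it below -/
import Mathlib

section
/- Let G be a profinite group acting continuously on a profinite space T. Then every partition of T can be refined by a G-partition. -/
open Pointwise

/-- A partition of a profinite space `T`: a finite family of nonempty pairwise disjoint
clopen subsets whose union is `T`. -/
def IsPartition {T : Type*} [TopologicalSpace T] (P : Finset (Set T)) : Prop :=
  (∀ U ∈ P, U.Nonempty ∧ IsClopen U) ∧
  (∀ U ∈ P, ∀ V ∈ P, U ≠ V → Disjoint U V) ∧
  (⋃ U ∈ P, U) = Set.univ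

/-- A partition `Q` refines a partition `P` if every member of `Q` is contained in some
member of `P`. -/
def Refines {T : Type*} [TopologicalSpace T] (Q P : Finset (Set T)) : Prop :=
  ∀ U ∈ Q, ∃ V ∈ P, U ⊆ V

/-- A `G`-partition: a partition such that for every member `U` and every `g ∈ G`,
either `g • U = U` or `g • U` and `U` are disjoint. -/
def IsGPartition {T : Type*} [TopologicalSpace T] (G : Type*) [Group G] [MulAction G T]
    (P : Finset (Set T)) : Prop :=
  IsPartition P ∧ ∀ U ∈ P, ∀ g : G, g • U = U ∨ Disjoint (g • U) U

/-- Let `G` be a profinite group acting continuously on a profinite space `T`. Then every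
partition of `T` can be refined by a `G`-partition. -/
theorem partition_refined_by_G_partition
    {G T : Type*} [Group G] [TopologicalSpace G] [IsTopologicalGroup G]
    [CompactSpace G] [T2Space G] [TotallyDisconnectedSpace G]
    [TopologicalSpace T] [CompactSpace T] [T2Space T] [TotallyDisconnectedSpace T]
    [MulAction G T] [ContinuousSMul G T]
    (P : Finset (Set T)) (hP : IsPartition P) :
    ∃ Q : Finset (Set T), IsGPartition G Q ∧ Refines Q P := by
  classical
  obtain ⟨hne, hdisj, hcover⟩ := hP
  -- uniqueness of parts
  have huniq : ∀ U ∈ P, ∀ V ∈ P, ∀ x : T, x ∈ U → x ∈ V → U = V := by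
    intro U hU V hV x hxU hxV
    by_contra h
    exact (hdisj U hU V hV h).ne_of_mem hxU hxV rfl
  have hex : ∀ x : T, ∃ U ∈ P, x ∈ U := by
    intro x
    have : x ∈ ⋃ U ∈ P, U := hcover ▸ Set.mem_univ x
    simpa using this
  -- subset implies equal
  have hsub_eq : ∀ g : G, (∀ U ∈ P, g • U ⊆ U) → ∀ U ∈ P, g • U = U := by
    intro g hg U hU
    refine subset_antisymm (hg U hU) ?_
    intro x hx
    obtain ⟨V, hV, hxV⟩ := hex (g⁻¹ • x)
    have hxgV : x ∈ g • V := ⟨g⁻¹ • x, hxV, by simp⟩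
    have : x ∈ V := hg V hV hxgV
    have hVU : V = U := huniq V hV U hU x this hx
    exact ⟨g⁻¹ • x, hVU ▸ hxV, by simp⟩
  -- the subgroup N of elements preserving every part
  set N : Subgroup G :=
    { carrier := {g : G | ∀ U ∈ P, g • U = U}
      one_mem' := by intro U hU; simp
      mul_mem' := by
        intro a b ha hb U hU
        rw [mul_smul, hb U hU, ha U hU]
      inv_mem' := by
        intro a ha U hU
        have h1 := ha U hU
        conv_lhs => rw [← h1]
        rw [inv_smul_smul] } with hN
  have hNmem : ∀ n : G, n ∈ N → ∀ U ∈ P, n • U = U := fun n hn => hn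
  have hNopen : IsOpen (N : Set G) := by
    have heq : (N : Set G) = ⋂ U ∈ P, {g : G | g • U ⊆ U} := by
      ext g
      simp only [Set.mem_iInter, Set.mem_setOf_eq, SetLike.mem_coe]
      constructor
      · intro h U hU
        exact (h U hU).subset
      · intro h
        exact hsub_eq g h
    rw [heq]
    refine isOpen_biInter_finset fun U hU => ?_
    have hUc : IsClopen U := (hne U hU).2
    have hC : IsClosed {p : G × T | p.2 ∈ U ∧ p.1 • p.2 ∉ U} := by
      refine (hUc.1.preimage continuous_snd).inter ?_
      exact (hUc.2.preimage continuous_smul).isClosed_compl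
    have himg : IsClosed (Prod.fst '' {p : G × T | p.2 ∈ U ∧ p.1 • p.2 ∉ U}) :=
      isClosedMap_fst_of_compactSpace _ hC
    have heq2 : {g : G | g • U ⊆ U} = (Prod.fst '' {p : G × T | p.2 ∈ U ∧ p.1 • p.2 ∉ U})ᶜ := by
      ext g
      simp only [Set.mem_setOf_eq, Set.mem_compl_iff]
      constructor
      · intro h hmem
        obtain ⟨⟨a, b⟩, ⟨hb, hnb⟩, rfl⟩ := hmem
        exact hnb (h (Set.smul_mem_smul_set hb))
      · intro h x hx
        obtain ⟨y, hy, rfl⟩ := hx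
        by_contra hc
        exact h ⟨(g, y), ⟨hy, hc⟩, rfl⟩
    rw [heq2]
    exact himg.isOpen_compl
  haveI : Finite (G ⧸ N) := Subgroup.quotient_finite_of_isOpen N hNopen
  haveI : Fintype (G ⧸ N) := Fintype.ofFinite _
  -- representatives
  let r : G → G := fun g => (QuotientGroup.mk g : G ⧸ N).out
  have hrmk : ∀ g : G, (QuotientGroup.mk (r g) : G ⧸ N) = QuotientGroup.mk g := by
    intro g; exact QuotientGroup.out_eq' _
  set S : Finset G := Finset.image (fun q : G ⧸ N => q.out) Finset.univ with hS
  have hrS : ∀ g : G, r g ∈ S := by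
    intro g; exact Finset.mem_image.2 ⟨QuotientGroup.mk g, Finset.mem_univ _, rfl⟩
  have hSfix : ∀ s ∈ S, r s = s := by
    intro s hs
    obtain ⟨q, _, rfl⟩ := Finset.mem_image.1 hs
    show (QuotientGroup.mk q.out : G ⧸ N).out = q.out
    rw [QuotientGroup.out_eq']
  -- membership depends only on the coset
  have hcoset : ∀ g g' : G, (QuotientGroup.mk g : G ⧸ N) = QuotientGroup.mk g' →
      ∀ U ∈ P, ∀ x : T, g⁻¹ • x ∈ U ↔ g'⁻¹ • x ∈ U := by
    intro g g' hgg' U hU x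
    have hn : g⁻¹ * g' ∈ N := QuotientGroup.eq.1 hgg'
    have hninv : (g⁻¹ * g')⁻¹ ∈ N := N.inv_mem hn
    have hfix : (g⁻¹ * g')⁻¹ • U = U := hNmem _ hninv U hU
    have : g'⁻¹ • x = (g⁻¹ * g')⁻¹ • (g⁻¹ • x) := by
      rw [← mul_smul]; congr 1; group
    rw [this]
    conv_rhs => rw [← hfix]
    exact Iff.symm Set.smul_mem_smul_set_iff
  -- coloring sets
  let Tc : ({s : G // s ∈ S} → {U : Set T // U ∈ P}) → Set T :=
    fun c => {x : T | ∀ s : {s : G // s ∈ S}, (s : G)⁻¹ • x ∈ (c s : Set T)}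
  -- shared point implies equal
  have hTc_eq : ∀ c c', ∀ x : T, x ∈ Tc c → x ∈ Tc c' → Tc c = Tc c' := by
    intro c c' x hx hx'
    have hcc : ∀ s, (c s : Set T) = (c' s : Set T) := fun s =>
      huniq _ (c s).2 _ (c' s).2 _ (hx s) (hx' s)
    unfold Tc
    ext y
    simp only [Set.mem_setOf_eq]
    exact forall_congr' fun s => by rw [hcc s]
  set Q : Finset (Set T) :=
    (Finset.image Tc Finset.univ).filter (fun V => V.Nonempty) with hQ
  have hQmem : ∀ V ∈ Q, ∃ c, Tc c = V ∧ V.Nonempty := by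
    intro V hV
    obtain ⟨hV1, hV2⟩ := Finset.mem_filter.1 hV
    obtain ⟨c, _, hc⟩ := Finset.mem_image.1 hV1
    exact ⟨c, hc, hV2⟩
  -- each point lies in some Tc
  have hpoint : ∀ x : T, ∃ c, x ∈ Tc c := by
    intro x
    refine ⟨fun s => ⟨(hex ((s : G)⁻¹ • x)).choose, (hex ((s : G)⁻¹ • x)).choose_spec.1⟩, ?_⟩
    intro s
    exact (hex ((s : G)⁻¹ • x)).choose_spec.2
  -- h • Tc c is again a Tc
  have hsmul : ∀ (h : G) c, h • Tc c =
      Tc (fun s' => c ⟨r (h⁻¹ * (s' : G)), hrS _⟩) := by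
    intro h c
    ext y
    have hy : y ∈ h • Tc c ↔ ∀ s : {s : G // s ∈ S}, ((h * (s : G)))⁻¹ • y ∈ (c s : Set T) := by
      rw [Set.mem_smul_set_iff_inv_smul_mem]
      simp only [Tc, Set.mem_setOf_eq, mul_inv_rev]
      exact forall_congr' fun s => by rw [mul_smul]
    rw [hy]
    simp only [Tc, Set.mem_setOf_eq]
    constructor
    · intro hall s'
      set s : {s : G // s ∈ S} := ⟨r (h⁻¹ * (s' : G)), hrS _⟩ with hs
      have hmk : (QuotientGroup.mk (h * (s : G)) : G ⧸ N) = QuotientGroup.mk (s' : G) := by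
        have h1 : (QuotientGroup.mk (s : G) : G ⧸ N) = QuotientGroup.mk (h⁻¹ * (s' : G)) :=
          hrmk _
        rw [QuotientGroup.eq] at h1 ⊢
        convert h1 using 1
        group
      have := hall s
      rwa [hcoset _ _ hmk _ (c s).2 y] at this
    · intro hall s
      set s' : {s : G // s ∈ S} := ⟨r (h * (s : G)), hrS _⟩ with hs'
      have hmk1 : (QuotientGroup.mk (s' : G) : G ⧸ N) = QuotientGroup.mk (h * (s : G)) := hrmk _
      have hmk2 : (QuotientGroup.mk (h⁻¹ * (s' : G)) : G ⧸ N) = QuotientGroup.mk (s : G) := by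
        rw [QuotientGroup.eq]
        have := QuotientGroup.eq.1 hmk1
        convert this using 1
        group
      have hrfix : r (h⁻¹ * (s' : G)) = (s : G) := by
        have : r (h⁻¹ * (s' : G)) = r (s : G) := by
          unfold r
          rw [hmk2]
        rw [this, hSfix _ s.2]
      have := hall s'
      have hceq : c ⟨r (h⁻¹ * (s' : G)), hrS _⟩ = c s := by
        congr 1
        exact Subtype.ext hrfix
      rw [hceq] at this
      rwa [hcoset _ _ hmk1 _ (c s).2 y] at this
  refine ⟨Q, ⟨⟨?_, ?_, ?_⟩, ?_⟩, ?_⟩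
  · -- nonempty and clopen
    intro U hU
    obtain ⟨c, rfl, hne'⟩ := hQmem U hU
    refine ⟨hne', ?_⟩
    have : Tc c = ⋂ s : {s : G // s ∈ S}, (fun x : T => (s : G)⁻¹ • x) ⁻¹' (c s : Set T) := by
      ext x; simp [Tc]
    rw [this]
    have hclo : ∀ s : {s : G // s ∈ S},
        IsClopen ((fun x : T => (s : G)⁻¹ • x) ⁻¹' (c s : Set T)) := by
      intro s
      exact ((hne _ (c s).2).2).preimage (continuous_const_smul _)
    exact isClopen_iInter_of_finite hclo
  · -- pairwise disjoint
    intro U hU V hV hUV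
    obtain ⟨c, rfl, _⟩ := hQmem U hU
    obtain ⟨c', rfl, _⟩ := hQmem V hV
    rw [Set.disjoint_left]
    intro x hx hx'
    exact hUV (hTc_eq c c' x hx hx')
  · -- cover
    ext x
    simp only [Set.mem_iUnion, Set.mem_univ, iff_true]
    obtain ⟨c, hc⟩ := hpoint x
    refine ⟨Tc c, ?_, hc⟩
    rw [hQ]
    exact Finset.mem_filter.2 ⟨Finset.mem_image.2 ⟨c, Finset.mem_univ _, rfl⟩, ⟨x, hc⟩⟩
  · -- G-invariance
    intro U hU h
    obtain ⟨c, rfl, hne'⟩ := hQmem U hU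
    rw [or_iff_not_imp_right]
    intro hnd
    rw [Set.not_disjoint_iff] at hnd
    obtain ⟨x, hx1, hx2⟩ := hnd
    rw [hsmul h c] at hx1 ⊢
    rw [hTc_eq _ _ x hx1 hx2]
  · -- refines
    intro U hU
    obtain ⟨c, rfl, hne'⟩ := hQmem U hU
    set s₀ : {s : G // s ∈ S} := ⟨r 1, hrS 1⟩ with hs₀
    refine ⟨(c s₀ : Set T), (c s₀).2, ?_⟩
    intro x hx
    have hmem : (s₀ : G)⁻¹ • x ∈ (c s₀ : Set T) := hx s₀
    have hn : (s₀ : G)⁻¹ ∈ N := by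
      have : (QuotientGroup.mk (s₀ : G) : G ⧸ N) = QuotientGroup.mk 1 := hrmk 1
      have h1 : (1 : G)⁻¹ * (s₀ : G) ∈ N := QuotientGroup.eq.1 this.symm
      simpa using N.inv_mem h1
    have hfix : (s₀ : G)⁻¹ • (c s₀ : Set T) = (c s₀ : Set T) := hNmem _ hn _ (c s₀).2
    have h2 : (s₀ : G)⁻¹ • x ∈ (s₀ : G)⁻¹ • (c s₀ : Set T) := by rw [hfix]; exact hmem
    exact Set.smul_mem_smul_set_iff.1 h2
end

section
/- Let G be a profinite group acting continuously on a profinite space T and let t ∈ T. Then the collection ℬ(t) of all G-blocks of T containing t is a basis of neighborhoods of t; in particular {t} = ⋂_{U ∈ ℬ(t)} U. -/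
open Pointwise

/-- A `G`-block is a member of some `G`-partition of `T`. -/
def IsGBlock {T : Type*} [TopologicalSpace T] (G : Type*) [Group G] [MulAction G T]
    (U : Set T) : Prop :=
  ∃ P : Finset (Set T), IsGPartition G P ∧ U ∈ P

section Aux

variable {G T : Type*} [Group G] [MulAction G T]

/-- The "atom" of `x` with respect to a family `S` of sets: all points having the same
membership pattern in members of `S` as `x`. -/
def atomOf (S : Set (Set T)) (x : T) : Set T :=
  {y | ∀ V ∈ S, x ∈ V ↔ y ∈ V}

lemma mem_atomOf_self (S : Set (Set T)) (x : T) : x ∈ atomOf S x :=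
  fun _ _ => Iff.rfl

lemma atomOf_eq_of_mem {S : Set (Set T)} {x y : T} (h : y ∈ atomOf S x) :
    atomOf S y = atomOf S x := by
  ext z
  constructor <;> intro hz V hV
  · exact (h V hV).trans (hz V hV)
  · exact ((h V hV).symm).trans (hz V hV)

lemma isClopen_atomOf [TopologicalSpace T] {S : Set (Set T)} (hS : S.Finite)
    (hcl : ∀ V ∈ S, IsClopen V) (x : T) : IsClopen (atomOf S x) := by
  have heq : atomOf S x = (⋂ V ∈ {V ∈ S | x ∈ V}, V) ∩ ⋂ V ∈ {V ∈ S | x ∉ V}, Vᶜ := by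
    ext y
    simp only [atomOf, Set.mem_setOf_eq, Set.mem_inter_iff, Set.mem_iInter,
      Set.mem_compl_iff]
    constructor
    · intro h
      exact ⟨fun V hV => (h V hV.1).mp hV.2, fun V hV hy => hV.2 ((h V hV.1).mpr hy)⟩
    · rintro ⟨h1, h2⟩ V hV
      constructor
      · intro hx; exact h1 V ⟨hV, hx⟩
      · intro hy; by_contra hx; exact h2 V ⟨hV, hx⟩ hy
  rw [heq]
  exact ((hS.subset (Set.sep_subset _ _)).isClopen_biInter fun V hV => hcl V hV.1).inter
    ((hS.subset (Set.sep_subset _ _)).isClopen_biInter fun V hV => (hcl V hV.1).compl)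

lemma smul_atomOf {S : Set (Set T)} (hst : ∀ g : G, ∀ V ∈ S, g • V ∈ S) (g : G) (x : T) :
    g • atomOf S x = atomOf S (g • x) := by
  ext y
  rw [Set.mem_smul_set_iff_inv_smul_mem]
  constructor
  · intro h V hV
    have h' := h (g⁻¹ • V) (hst g⁻¹ V hV)
    rw [Set.mem_inv_smul_set_iff, Set.mem_inv_smul_set_iff, smul_inv_smul] at h'
    exact h'
  · intro h V hV
    have h' := h (g • V) (hst g V hV)
    rw [Set.smul_mem_smul_set_iff, Set.mem_smul_set_iff_inv_smul_mem] at h'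
    exact h'

lemma finite_range_atomOf {S : Set (Set T)} (hS : S.Finite) :
    (Set.range (atomOf S)).Finite := by
  have key : Set.range (atomOf S) ⊆
      (fun A : Set (Set T) => {y | ∀ V ∈ S, V ∈ A ↔ y ∈ V}) '' {A | A ⊆ S} := by
    rintro _ ⟨x, rfl⟩
    refine ⟨{V ∈ S | x ∈ V}, fun V hV => hV.1, ?_⟩
    ext y
    simp only [Set.mem_setOf_eq, atomOf]
    constructor <;> intro h V hV
    · simpa [hV] using h V hV
    · simpa [hV] using h V hV
  exact ((hS.finite_subsets).image _).subset key

end Aux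

section Orbit

variable {G T : Type*} [Group G] [MulAction G T] [TopologicalSpace G] [TopologicalSpace T]
  [IsTopologicalGroup G] [ContinuousSMul G T] [CompactSpace G] [CompactSpace T]

lemma isOpen_smulSubset {W : Set T} (hW : IsClopen W) :
    IsOpen {g : G | g • W ⊆ W} := by
  rw [isOpen_iff_forall_mem_open]
  intro g₀ hg₀
  have hn : IsOpen {p : G × T | p.1 • p.2 ∈ W} :=
    hW.2.preimage continuous_smul
  have hsub : {g₀} ×ˢ W ⊆ {p : G × T | p.1 • p.2 ∈ W} := by
    rintro ⟨g, w⟩ ⟨hg, hw⟩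
    simp only [Set.mem_singleton_iff] at hg
    subst hg
    exact hg₀ ⟨w, hw, rfl⟩
  obtain ⟨u, v, hu, _, hgu, hWv, huv⟩ :=
    generalized_tube_lemma isCompact_singleton (hW.1.isCompact) hn hsub
  refine ⟨u, fun g hg => ?_, hu, hgu rfl⟩
  rintro _ ⟨w, hw, rfl⟩
  exact huv (Set.mk_mem_prod hg (hWv hw))

lemma isOpen_smulEq {W : Set T} (hW : IsClopen W) :
    IsOpen {g : G | g • W = W} := by
  have : {g : G | g • W = W} =
      {g : G | g • W ⊆ W} ∩ (fun g : G => g⁻¹) ⁻¹' {g : G | g • W ⊆ W} := by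
    ext g
    simp only [Set.mem_setOf_eq, Set.mem_inter_iff, Set.mem_preimage]
    constructor
    · intro h
      refine ⟨h.le, ?_⟩
      exact ((congrArg (g⁻¹ • ·) h).symm.trans (inv_smul_smul g W)).subset
    · rintro ⟨h1, h2⟩
      refine le_antisymm h1 ?_
      calc W = g • (g⁻¹ • W) := (smul_inv_smul g W).symm
        _ ⊆ g • W := Set.smul_set_mono h2
  rw [this]
  exact (isOpen_smulSubset hW).inter ((isOpen_smulSubset hW).preimage continuous_inv)

lemma finite_orbit_clopen {W : Set T} (hW : IsClopen W) :
    (Set.range fun g : G => g • W).Finite := by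
  have hfib : ∀ g₀ : G, IsOpen {g : G | g • W = g₀ • W} := by
    intro g₀
    have : {g : G | g • W = g₀ • W} = (fun g : G => g₀⁻¹ * g) ⁻¹' {g : G | g • W = W} := by
      ext g
      simp only [Set.mem_setOf_eq, Set.mem_preimage, mul_smul]
      constructor
      · intro h; rw [h, inv_smul_smul]
      · intro h
        have := congrArg (fun s => g₀ • s) h
        simpa [smul_smul] using this
    rw [this]
    exact (isOpen_smulEq hW).preimage (continuous_const.mul continuous_id)
  have hcov : Set.univ ⊆ ⋃ g₀ : G, {g : G | g • W = g₀ • W} :=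
    fun g _ => Set.mem_iUnion.mpr ⟨g, rfl⟩
  obtain ⟨s, hs⟩ := isCompact_univ.elim_finite_subcover _ hfib hcov
  have : Set.range (fun g : G => g • W) ⊆ (fun g₀ : G => g₀ • W) '' s := by
    rintro _ ⟨g, rfl⟩
    obtain ⟨g₀, hg₀, hg⟩ := Set.mem_iUnion₂.mp (hs (Set.mem_univ g))
    exact ⟨g₀, hg₀, hg.symm⟩
  exact (s.finite_toSet.image _).subset this

end Orbit

theorem exists_block_subset
    {G T : Type*} [Group G] [TopologicalSpace G] [IsTopologicalGroup G]
    [CompactSpace G]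
    [TopologicalSpace T] [CompactSpace T]
    [MulAction G T] [ContinuousSMul G T] {t : T} {W : Set T}
    (hW : IsClopen W) (htW : t ∈ W) :
    ∃ U : Set T, IsGBlock G U ∧ t ∈ U ∧ U ⊆ W := by
  set S : Set (Set T) := Set.range fun g : G => g • W with hSdef
  have hSfin : S.Finite := finite_orbit_clopen hW
  have hWS : W ∈ S := ⟨1, one_smul _ _⟩
  have hstable : ∀ g : G, ∀ V ∈ S, g • V ∈ S := by
    rintro g _ ⟨g', rfl⟩
    exact ⟨g * g', mul_smul g g' W⟩
  have hclS : ∀ V ∈ S, IsClopen V := by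
    rintro _ ⟨g, rfl⟩
    exact ⟨hW.1.smul g, hW.2.smul g⟩
  have hrangefin : (Set.range (atomOf S)).Finite := finite_range_atomOf hSfin
  set P : Finset (Set T) := hrangefin.toFinset with hPdef
  have hmemP : ∀ x : T, atomOf S x ∈ P := fun x =>
    hrangefin.mem_toFinset.mpr ⟨x, rfl⟩
  have hPmem : ∀ U ∈ P, ∃ x : T, atomOf S x = U := fun U hU =>
    hrangefin.mem_toFinset.mp hU
  have hdisj : ∀ U ∈ P, ∀ V ∈ P, U ≠ V → Disjoint U V := by
    intro U hU V hV hne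
    obtain ⟨x, rfl⟩ := hPmem U hU
    obtain ⟨y, rfl⟩ := hPmem V hV
    rw [Set.disjoint_left]
    intro z hzx hzy
    exact hne ((atomOf_eq_of_mem hzx).symm.trans (atomOf_eq_of_mem hzy))
  have hGP : IsGPartition G P := by
    refine ⟨⟨?_, hdisj, ?_⟩, ?_⟩
    · intro U hU
      obtain ⟨x, rfl⟩ := hPmem U hU
      exact ⟨⟨x, mem_atomOf_self S x⟩, isClopen_atomOf hSfin hclS x⟩
    · apply Set.eq_univ_of_forall
      intro x
      exact Set.mem_biUnion (hmemP x) (mem_atomOf_self S x)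
    · intro U hU g
      obtain ⟨x, rfl⟩ := hPmem U hU
      rw [smul_atomOf hstable]
      by_cases h : atomOf S (g • x) = atomOf S x
      · exact Or.inl h
      · exact Or.inr (hdisj _ (hmemP _) _ (hmemP _) h)
  refine ⟨atomOf S t, ⟨P, hGP, hmemP t⟩, mem_atomOf_self S t, ?_⟩
  intro y hy
  exact (hy W hWS).mp htW

/-- Let `G` be a profinite group acting continuously on a profinite space `T` and `t ∈ T`.
Then the collection of `G`-blocks containing `t` is a basis of neighborhoods of `t`; in
particular `{t}` is the intersection of all `G`-blocks containing `t`. -/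
theorem blocks_nhds_basis
    {G T : Type*} [Group G] [TopologicalSpace G] [IsTopologicalGroup G]
    [CompactSpace G] [T2Space G] [TotallyDisconnectedSpace G]
    [TopologicalSpace T] [CompactSpace T] [T2Space T] [TotallyDisconnectedSpace T]
    [MulAction G T] [ContinuousSMul G T] (t : T) :
    (nhds t).HasBasis (fun U : Set T => IsGBlock G U ∧ t ∈ U) id ∧
    (⋂ U ∈ {U : Set T | IsGBlock G U ∧ t ∈ U}, U) = {t} := by
  have hbasis : (nhds t).HasBasis (fun U : Set T => IsGBlock G U ∧ t ∈ U) id := by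
    rw [Filter.hasBasis_iff]
    intro s
    constructor
    · intro hs
      obtain ⟨O, hOs, hOopen, htO⟩ := mem_nhds_iff.mp hs
      obtain ⟨W, hWclopen, htW, hWO⟩ := compact_exists_isClopen_in_isOpen hOopen htO
      obtain ⟨U, hUblock, htU, hUW⟩ := exists_block_subset (G := G) hWclopen htW
      exact ⟨U, ⟨hUblock, htU⟩, hUW.trans (hWO.trans hOs)⟩
    · rintro ⟨U, ⟨⟨Pb, hPb, hUPb⟩, htU⟩, hUs⟩
      have hUopen : IsOpen U := (hPb.1.1 U hUPb).2.2
      exact Filter.mem_of_superset (hUopen.mem_nhds htU) hUs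
  refine ⟨hbasis, ?_⟩
  apply subset_antisymm
  · intro y hy
    rw [Set.mem_iInter₂] at hy
    by_contra hyt
    have hne : t ≠ y := by rintro rfl; exact hyt rfl
    have hnhds : {y}ᶜ ∈ nhds t := (isOpen_compl_singleton).mem_nhds hne
    obtain ⟨U, ⟨hUb, htU⟩, hUsub⟩ := (hbasis.mem_iff).mp hnhds
    exact hUsub (hy U ⟨hUb, htU⟩) rfl
  · rintro y rfl
    exact Set.mem_iInter₂.mpr fun U hU => hU.2
end

section
/- Let G be a profinite group acting continuously on a profinite space T and let t ∈ T. Let ℬ(t) be the collection of all G-blocks of T containing t. Then the stabilizer of t satisfies Stab_G(t) = ⋂_{U ∈ ℬ(t)} Stab_G(U), where Stab_G(U) = {g ∈ G | U·g = U}. -/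
open Pointwise

/-- The "atom" of the finite family `S` containing `x`. -/
def blockOf {T : Type*} (S : Finset (Set T)) (x : T) : Set T :=
  {y | ∀ D ∈ S, (y ∈ D ↔ x ∈ D)}

lemma mem_blockOf_self {T : Type*} (S : Finset (Set T)) (x : T) : x ∈ blockOf S x :=
  fun _ _ => Iff.rfl

lemma blockOf_eq_of_mem {T : Type*} (S : Finset (Set T)) {x y : T}
    (h : y ∈ blockOf S x) : blockOf S y = blockOf S x := by
  ext z
  exact forall₂_congr fun D hD => by rw [h D hD]

lemma finite_range_blockOf {T : Type*} (S : Finset (Set T)) :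
    (Set.range (blockOf S)).Finite := by
  classical
  have hsub : Set.range (blockOf S) ⊆
      (fun E : Finset (Set T) => {y : T | ∀ D ∈ S, (y ∈ D ↔ D ∈ E)}) '' ↑S.powerset := by
    rintro _ ⟨x, rfl⟩
    refine ⟨S.filter (fun D => x ∈ D),
      Finset.mem_coe.mpr (Finset.mem_powerset.mpr (Finset.filter_subset _ _)), ?_⟩
    ext y
    simp only [blockOf, Set.mem_setOf_eq, Finset.mem_filter]
    exact forall₂_congr fun D hD => by simp [hD]
  exact (S.powerset.finite_toSet.image _).subset hsub

lemma isClopen_blockOf {T : Type*} [TopologicalSpace T] (S : Finset (Set T))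
    (hS : ∀ D ∈ S, IsClopen D) (x : T) : IsClopen (blockOf S x) := by
  classical
  have : blockOf S x = ⋂ D ∈ S, (if x ∈ D then D else Dᶜ) := by
    ext y
    simp only [blockOf, Set.mem_setOf_eq, Set.mem_iInter]
    constructor
    · intro hy D hD
      by_cases hxD : x ∈ D
      · simpa [hxD] using (hy D hD).mpr hxD
      · simp only [hxD, if_false, Set.mem_compl_iff]
        exact fun hyD => hxD ((hy D hD).mp hyD)
    · intro hy D hD
      have := hy D hD
      by_cases hxD : x ∈ D <;> simp [hxD] at this <;> simp [hxD, this]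
  rw [this]
  exact isClopen_biInter_finset fun D hD => by
    by_cases hxD : x ∈ D
    · simpa [hxD] using hS D hD
    · simpa [hxD] using (hS D hD).compl

lemma smul_blockOf {G T : Type*} [Group G] [MulAction G T] (S : Finset (Set T))
    (hS : ∀ g : G, ∀ D ∈ S, g • D ∈ S) (g : G) (x : T) :
    g • blockOf S x = blockOf S (g • x) := by
  ext y
  rw [Set.mem_smul_set_iff_inv_smul_mem]
  constructor
  · intro hy D hD
    have h1 := hy (g⁻¹ • D) (hS g⁻¹ D hD)
    simpa [Set.mem_inv_smul_set_iff, smul_inv_smul] using h1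
  · intro hy D hD
    have h1 := hy (g • D) (hS g D hD)
    simpa [Set.mem_smul_set_iff_inv_smul_mem, Set.smul_mem_smul_set_iff] using h1

/-- Let `G` be a profinite group acting continuously on a profinite space `T` and `t ∈ T`.
Then `Stab_G(t) = ⋂_{U ∈ ℬ(t)} Stab_G(U)`, where `ℬ(t)` is the collection of `G`-blocks
containing `t`, and `Stab_G(U) = {g ∈ G | g • U = U}` (the stabilizer of the set `U` under
the induced action on subsets). -/
theorem stabilizer_eq_iInf_block_stabilizers
    {G T : Type*} [Group G] [TopologicalSpace G] [IsTopologicalGroup G]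
    [CompactSpace G] [T2Space G] [TotallyDisconnectedSpace G]
    [TopologicalSpace T] [CompactSpace T] [T2Space T] [TotallyDisconnectedSpace T]
    [MulAction G T] [ContinuousSMul G T] (t : T) :
    MulAction.stabilizer G t =
      ⨅ U ∈ {U : Set T | IsGBlock G U ∧ t ∈ U}, MulAction.stabilizer G U := by
  classical
  ext g
  simp only [MulAction.mem_stabilizer_iff, Subgroup.mem_iInf, Set.mem_setOf_eq]
  constructor
  · rintro hg U ⟨⟨P, ⟨_, hperm⟩, hUP⟩, htU⟩
    rcases hperm U hUP g with h | h
    · exact h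
    · exact absurd htU (Set.disjoint_left.mp h (hg ▸ Set.smul_mem_smul_set htU))
  · intro hg
    by_contra hne
    -- separate t and g • t by a clopen set C
    haveI : TotallySeparatedSpace T := loc_compact_t2_tot_disc_iff_tot_sep.mp ‹_›
    obtain ⟨C, hC, htC, hgtC⟩ :=
      exists_isClopen_of_totally_separated (fun h : t = g • t => hne h.symm)
    -- the stabilizer of C is open
    have hO : IsOpen {p : G × T | p.1 • p.2 ∈ C} := hC.isOpen.preimage continuous_smul
    have hcomp : IsCompact C := hC.isClosed.isCompact
    have hnbhd : ∃ W : Set G, IsOpen W ∧ (1 : G) ∈ W ∧ ∀ g' ∈ W, g' • C ⊆ C := by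
      choose u v hu hv humem hvmem huv using fun x (hx : x ∈ C) =>
        isOpen_prod_iff.mp hO 1 x (by simpa using hx)
      obtain ⟨s, hs⟩ := hcomp.elim_nhds_subcover' (fun x hx => v x hx)
        (fun x hx => (hv x hx).mem_nhds (hvmem x hx))
      refine ⟨⋂ x ∈ s, u x x.2, isOpen_biInter_finset fun x _ => hu x x.2,
        Set.mem_iInter₂.mpr fun x _ => humem x x.2, ?_⟩
      intro g' hg'
      rw [Set.smul_set_subset_iff]
      intro y hy
      obtain ⟨x, hxs, hyv⟩ := Set.mem_iUnion₂.mp (hs hy)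
      exact huv x x.2 (show (g', y) ∈ _ ×ˢ _ from ⟨Set.mem_iInter₂.mp hg' x hxs, hyv⟩)
    obtain ⟨W, hWopen, hW1, hWsub⟩ := hnbhd
    have hstabopen : IsOpen (MulAction.stabilizer G C : Set G) := by
      apply Subgroup.isOpen_of_mem_nhds
      refine Filter.mem_of_superset ((hWopen.inter hWopen.inv).mem_nhds
        ⟨hW1, by simpa using hW1⟩) ?_
      rintro g' ⟨hg1, hg2⟩
      have h2 : g'⁻¹ • C ⊆ C := hWsub _ (Set.mem_inv.mp hg2)
      have : C ⊆ g' • C := by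
        calc C = g' • g'⁻¹ • C := (smul_inv_smul g' C).symm
        _ ⊆ g' • C := Set.smul_set_mono h2
      exact MulAction.mem_stabilizer_iff.mpr (Set.Subset.antisymm (hWsub g' hg1) this)
    haveI : Finite (G ⧸ MulAction.stabilizer G C) :=
      Subgroup.quotient_finite_of_isOpen _ hstabopen
    haveI : Finite (MulAction.orbit G C) :=
      Finite.of_equiv _ (MulAction.orbitEquivQuotientStabilizer G C).symm
    have horbfin : (MulAction.orbit G C).Finite := Set.toFinite _
    set S : Finset (Set T) := horbfin.toFinset with hSdef
    have hmemS : ∀ D, D ∈ S ↔ D ∈ MulAction.orbit G C := fun D => horbfin.mem_toFinset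
    have hSclosed : ∀ g' : G, ∀ D ∈ S, g' • D ∈ S := by
      intro g' D hD
      obtain ⟨h, rfl⟩ := MulAction.mem_orbit_iff.mp ((hmemS D).mp hD)
      exact (hmemS _).mpr ⟨g' * h, (smul_smul g' h C).symm⟩
    have hSclopen : ∀ D ∈ S, IsClopen D := by
      intro D hD
      obtain ⟨h, rfl⟩ := MulAction.mem_orbit_iff.mp ((hmemS D).mp hD)
      exact ⟨hC.isClosed.smul h, hC.isOpen.smul h⟩
    have hCS : C ∈ S := (hmemS C).mpr (MulAction.mem_orbit_self C)
    -- the partition of atoms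
    set P : Finset (Set T) := (finite_range_blockOf S).toFinset with hPdef
    have hmemP : ∀ U, U ∈ P ↔ ∃ x, blockOf S x = U := fun U =>
      (finite_range_blockOf S).mem_toFinset
    have heqOrDisj : ∀ x y : T, blockOf S x = blockOf S y ∨
        Disjoint (blockOf S x) (blockOf S y) := by
      intro x y
      rcases Set.disjoint_or_nonempty_inter (blockOf S x) (blockOf S y) with h | ⟨z, hzx, hzy⟩
      · exact Or.inr h
      · exact Or.inl ((blockOf_eq_of_mem S hzx).symm.trans (blockOf_eq_of_mem S hzy))
    have hGP : IsGPartition G P := by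
      refine ⟨⟨?_, ?_, ?_⟩, ?_⟩
      · rintro U hU
        obtain ⟨x, rfl⟩ := (hmemP U).mp hU
        exact ⟨⟨x, mem_blockOf_self S x⟩, isClopen_blockOf S hSclopen x⟩
      · rintro U hU V hV hUV
        obtain ⟨x, rfl⟩ := (hmemP U).mp hU
        obtain ⟨y, rfl⟩ := (hmemP V).mp hV
        exact (heqOrDisj x y).resolve_left hUV
      · rw [Set.eq_univ_iff_forall]
        intro x
        exact Set.mem_iUnion₂.mpr ⟨blockOf S x, (hmemP _).mpr ⟨x, rfl⟩, mem_blockOf_self S x⟩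
      · rintro U hU g'
        obtain ⟨x, rfl⟩ := (hmemP U).mp hU
        rw [smul_blockOf S hSclosed g' x]
        exact heqOrDisj (g' • x) x
    -- the block containing t
    have hblock : IsGBlock G (blockOf S t) := ⟨P, hGP, (hmemP _).mpr ⟨t, rfl⟩⟩
    have hfix : g • blockOf S t = blockOf S t := hg _ ⟨hblock, mem_blockOf_self S t⟩
    have hgt : g • t ∈ blockOf S t := hfix ▸ Set.smul_mem_smul_set (mem_blockOf_self S t)
    exact hgtC ((hgt C hCS).mpr htC)
end

section
/- Let a finite group G act continuously on a profinite space T and let 𝒫 be a partition of T. Then there is a G-partition {T_1, …, T_n} of T finer than 𝒫 such that for every i there exists t_i ∈ T_i with Stab_G(T_i) = Stab_G(t_i). -/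
open Pointwise

section Aux

set_option linter.unusedSectionVars false

open MulAction

variable {G T : Type*} [Group G] [Finite G]
  [TopologicalSpace T] [CompactSpace T] [T2Space T] [TotallyDisconnectedSpace T]
  [MulAction G T]

private lemma sub_eq_of_le_of_card_le {H K : Subgroup G} (h : H ≤ K)
    (hc : Nat.card K ≤ Nat.card H) : H = K := by
  apply SetLike.coe_injective
  apply Set.eq_of_subset_of_ncard_le h
  rw [← Nat.card_coe_set_eq, ← Nat.card_coe_set_eq]
  exact hc

private lemma smul_isClopen (hcont : ∀ g : G, Continuous fun t : T => g • t)
    (g : G) {V : Set T} (hV : IsClopen V) : IsClopen (g • V) := by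
  have h : g • V = (fun x : T => g⁻¹ • x) ⁻¹' V := by
    ext x; simp [Set.mem_smul_set_iff_inv_smul_mem]
  rw [h]
  exact hV.preimage (hcont g⁻¹)

private lemma card_stab_smul (g : G) (u : T) :
    Nat.card (stabilizer G (g • u)) = Nat.card (stabilizer G u) := by
  rw [stabilizer_smul_eq_stabilizer_map_conj]
  exact (Nat.card_congr ((stabilizer G u).equivMapOfInjective _
    (MulAut.conj g).injective).toEquiv).symm

/-- Basic neighborhood construction: any point has a clopen neighborhood whose translates
are pairwise disjoint or equal, whose stabilizer is the stabilizer of the point, and each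
of whose translates is contained in a member of `P`. -/
private lemma exists_nbhd (hcont : ∀ g : G, Continuous fun t : T => g • t)
    {P : Finset (Set T)} (hP : IsPartition P) (t : T) :
    ∃ V : Set T, IsClopen V ∧ t ∈ V ∧
      (∀ g : G, g • t = t → g • V = V) ∧
      (∀ g : G, g • t ≠ t → Disjoint (g • V) V) ∧
      (∀ g : G, ∃ U ∈ P, g • V ⊆ U) := by
  haveI : TotallySeparatedSpace T := loc_compact_t2_tot_disc_iff_tot_sep.mp ‹_›
  -- step 1: separating clopen sets
  have hW : ∀ g : G, ∃ Wg : Set T, IsClopen Wg ∧ t ∈ Wg ∧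
      (g • t ≠ t → Disjoint (g • Wg) Wg) := by
    intro g
    by_cases h : g • t = t
    · exact ⟨Set.univ, isClopen_univ, trivial, fun h' => absurd h h'⟩
    · obtain ⟨U, hU, htU, hgU⟩ :=
        exists_isClopen_of_totally_separated (show t ≠ g • t from fun e => h e.symm)
      refine ⟨U ∩ (fun x : T => g • x) ⁻¹' Uᶜ, hU.inter ((hU.compl).preimage (hcont g)),
        ⟨htU, hgU⟩, fun _ => ?_⟩
      rw [Set.disjoint_left]
      rintro x hx hx'
      obtain ⟨w, hw, rfl⟩ := hx
      exact hw.2 hx'.1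
  choose W hWc hWt hWd using hW
  -- step 2: members of P containing the translates of t
  have hU : ∀ g : G, ∃ U ∈ P, g • t ∈ U := by
    intro g
    have h2 : (g • t : T) ∈ ⋃ U ∈ P, U := by rw [hP.2.2]; exact Set.mem_univ _
    simpa using h2
  choose Umem hUP hUmem using hU
  -- step 3: the basic neighborhood W'
  set W' : Set T := (⋂ g : G, W g) ∩ ⋂ g : G, (fun x : T => g • x) ⁻¹' Umem g with hW'def
  have hW'c : IsClopen W' :=
    (isClopen_iInter_of_finite hWc).inter (isClopen_iInter_of_finite
      (fun g => ((hP.1 _ (hUP g)).2).preimage (hcont g)))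
  have htW' : t ∈ W' := by
    refine ⟨Set.mem_iInter.2 hWt, Set.mem_iInter.2 fun g => ?_⟩
    exact hUmem g
  -- step 4: V
  set V : Set T := ⋂ s ∈ {g : G | g • t = t}, s • W' with hVdef
  have hVc : IsClopen V := by
    rw [hVdef, Set.biInter_eq_iInter]
    exact isClopen_iInter_of_finite fun s => smul_isClopen hcont _ hW'c
  have htV : t ∈ V := by
    refine Set.mem_biInter fun s hs => ?_
    have : (s : G) • t = t := hs
    exact ⟨t, htW', this⟩
  have hVsubW' : V ⊆ W' := by
    intro x hx
    have h1 : (1 : G) ∈ {g : G | g • t = t} := by simp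
    have := Set.mem_iInter₂.mp hx 1 h1
    simpa using this
  refine ⟨V, hVc, htV, ?_, ?_, ?_⟩
  · -- invariance under stabilizer
    intro g hg
    ext x
    simp only [hVdef, Set.mem_smul_set_iff_inv_smul_mem, Set.mem_iInter]
    constructor
    · intro h s hs
      have hs' : (g⁻¹ * s) • t = t := by
        rw [mul_smul, hs, inv_smul_eq_iff, hg]
      have := h (g⁻¹ * s) hs'
      have e : (g⁻¹ * s)⁻¹ • g⁻¹ • x = s⁻¹ • x := by
        rw [smul_smul]; congr 1; group
      rwa [e] at this
    · intro h s hs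
      have hs' : (g * s) • t = t := by rw [mul_smul, hs, hg]
      have := h (g * s) hs'
      have e : (g * s)⁻¹ • x = s⁻¹ • g⁻¹ • x := by
        rw [smul_smul]; congr 1; group
      rwa [e] at this
  · -- disjointness
    intro g hg
    have h1 : V ⊆ W g := fun x hx => Set.mem_iInter.mp (hVsubW' hx).1 g
    exact (hWd g hg).mono (Set.smul_set_mono h1) h1
  · -- refinement
    intro g
    refine ⟨Umem g, hUP g, ?_⟩
    rintro x ⟨w, hw, rfl⟩
    have : w ∈ (fun x : T => g • x) ⁻¹' Umem g :=
      Set.mem_iInter.mp (hVsubW' hw).2 g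
    exact this

/-- A good family for `R`: a finite family of nonempty pairwise disjoint clopen sets whose
union is `R`, closed under the action of `G`, refining `P`, and such that each member's
setwise stabilizer is the stabilizer of one of its points. -/
private def GoodFam (G : Type*) {T : Type*} [Group G] [TopologicalSpace T] [MulAction G T]
    (P : Finset (Set T)) (R : Set T) (Q : Finset (Set T)) : Prop :=
  (∀ U ∈ Q, U.Nonempty ∧ IsClopen U) ∧
  (∀ U ∈ Q, ∀ W ∈ Q, U ≠ W → Disjoint U W) ∧
  (⋃ U ∈ Q, U) = R ∧
  (∀ U ∈ Q, ∀ g : G, g • U ∈ Q) ∧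
  (∀ U ∈ Q, ∃ W ∈ P, U ⊆ W) ∧
  (∀ U ∈ Q, ∃ t ∈ U, stabilizer G U = stabilizer G t)

private lemma inner_lemma (hcont : ∀ g : G, Continuous fun t : T => g • t)
    {P : Finset (Set T)} (hP : IsPartition P) (V : T → Set T)
    (hVc : ∀ t, IsClopen (V t)) (hVt : ∀ t, t ∈ V t)
    (hVinv : ∀ t, ∀ g : G, g • t = t → g • V t = V t)
    (hVdisj : ∀ t, ∀ g : G, g • t ≠ t → Disjoint (g • V t) (V t))
    (hVP : ∀ t, ∀ g : G, ∃ U ∈ P, g • V t ⊆ U)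
    (n : ℕ)
    (IH : ∀ R : Set T, IsClopen R → (∀ g : G, g • R = R) →
      (∀ t ∈ R, Nat.card (stabilizer G t) ≤ n) → ∃ Q, GoodFam G P R Q)
    (L : List T) :
    (∀ t ∈ L, Nat.card (stabilizer G t) = n + 1) →
    ∀ R : Set T, IsClopen R → (∀ g : G, g • R = R) →
    (∀ t ∈ R, Nat.card (stabilizer G t) ≤ n + 1) →
    ({u ∈ R | n + 1 ≤ Nat.card (stabilizer G u)} ⊆ ⋃ t ∈ L, ⋃ g : G, g • V t) →
    ∃ Q, GoodFam G P R Q := by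
  classical
  haveI : Fintype G := Fintype.ofFinite G
  induction L with
  | nil =>
    intro _ R hRc hRi hRle hcov
    refine IH R hRc hRi fun t ht => ?_
    by_contra hgt
    have h1 : n + 1 ≤ Nat.card (stabilizer G t) := by omega
    have := hcov ⟨ht, h1⟩
    simpa using this
  | cons t0 L ih =>
    intro hL R hRc hRi hRle hcov
    have ht0card : Nat.card (stabilizer G t0) = n + 1 := hL t0 (by simp)
    have hmemR : ∀ (g : G) (x : T), x ∈ R → g • x ∈ R := by
      intro g x hx
      rw [← hRi g]
      exact Set.smul_mem_smul_set hx
    set C : Set T := V t0 ∩ R with hCdef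
    by_cases hCF : ∃ u ∈ C, n + 1 ≤ Nat.card (stabilizer G u)
    · -- main case: C contains a point with large stabilizer
      obtain ⟨u, huC, huF⟩ := hCF
      set O : Set T := ⋃ g : G, g • V t0 with hOdef
      have hOc : IsClopen O := isClopen_iUnion_of_finite fun g => smul_isClopen hcont g (hVc t0)
      have hOinv : ∀ g : G, g • O = O := by
        intro g
        rw [hOdef, Set.smul_set_iUnion]
        simp_rw [smul_smul]
        ext x
        simp only [Set.mem_iUnion]
        exact ⟨fun ⟨h, hx⟩ => ⟨g * h, hx⟩,
          fun ⟨h, hx⟩ => ⟨g⁻¹ * h, by rwa [mul_inv_cancel_left]⟩⟩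
      set R' : Set T := R \ O with hR'def
      have hR'c : IsClopen R' := hRc.diff hOc
      have hR'i : ∀ g : G, g • R' = R' := by
        intro g
        rw [hR'def, Set.smul_set_sdiff, hRi, hOinv]
      have hcov' : {u' ∈ R' | n + 1 ≤ Nat.card (stabilizer G u')} ⊆
          ⋃ t ∈ L, ⋃ g : G, g • V t := by
        rintro x ⟨hxR', hxcard⟩
        have hx := hcov ⟨hxR'.1, hxcard⟩
        rw [Set.mem_iUnion₂] at hx
        obtain ⟨t, htL, hxt⟩ := hx
        rcases List.mem_cons.mp htL with rfl | htL'
        · exact absurd hxt hxR'.2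
        · exact Set.mem_biUnion htL' hxt
      obtain ⟨Q', hQ'⟩ := ih (fun t ht => hL t (List.mem_cons_of_mem _ ht)) R' hR'c hR'i
        (fun t ht => hRle t ht.1) hcov'
      obtain ⟨hQ'1, hQ'2, hQ'3, hQ'4, hQ'5, hQ'6⟩ := hQ'
      have hQ'sub : ∀ U ∈ Q', U ⊆ R' := by
        intro U hU x hx
        rw [← hQ'3]
        exact Set.mem_biUnion hU hx
      -- basic facts about C
      have hCne : C.Nonempty := ⟨u, huC⟩
      have hCco : IsClopen C := (hVc t0).inter hRc
      have hust : stabilizer G u = stabilizer G t0 := by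
        have hle : stabilizer G u ≤ stabilizer G t0 := by
          intro g hg
          rw [mem_stabilizer_iff] at hg ⊢
          by_contra hne
          have hdisj := hVdisj t0 g hne
          have h1 : u ∈ g • V t0 := by
            rw [← hg]
            exact Set.smul_mem_smul_set huC.1
          exact Set.disjoint_left.mp hdisj h1 huC.1
        exact sub_eq_of_le_of_card_le hle (by rw [ht0card]; exact huF)
      have hCstab : ∀ g : G, g • C = C ↔ g • t0 = t0 := by
        intro g
        constructor
        · intro h
          by_contra hne
          have hdisj := hVdisj t0 g hne
          obtain ⟨x, hxC⟩ := hCne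
          have h1 : x ∈ g • V t0 := by
            rw [← h] at hxC
            exact Set.smul_set_mono Set.inter_subset_left hxC
          exact Set.disjoint_left.mp hdisj h1 hxC.1
        · intro h
          rw [hCdef, Set.smul_set_inter, hVinv t0 g h, hRi]
      have hkey : ∀ g h : G, ¬ Disjoint (g • C) (h • C) → g • C = h • C := by
        intro g h hnd
        obtain ⟨x, hxg, hxh⟩ := Set.not_disjoint_iff.mp hnd
        have hx1 : h⁻¹ • x ∈ (h⁻¹ * g) • C := by
          rw [mul_smul]
          exact Set.smul_mem_smul_set hxg
        have hx2 : h⁻¹ • x ∈ C := Set.mem_smul_set_iff_inv_smul_mem.mp hxh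
        have ht : (h⁻¹ * g) • t0 = t0 := by
          by_contra hne
          have hdisj := hVdisj t0 _ hne
          have h1 : h⁻¹ • x ∈ (h⁻¹ * g) • V t0 :=
            Set.smul_set_mono Set.inter_subset_left hx1
          exact Set.disjoint_left.mp hdisj h1 hx2.1
        have h1 : (h⁻¹ * g) • C = C := (hCstab _).mpr ht
        have h2 := congrArg (fun S : Set T => h • S) h1
        simpa [smul_smul, mul_inv_cancel_left] using h2
      have hCsubO : ∀ g : G, g • C ⊆ O := by
        intro g
        refine (Set.smul_set_mono Set.inter_subset_left).trans ?_
        exact Set.subset_iUnion (fun g : G => g • V t0) g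
      have hCsubR : ∀ g : G, g • C ⊆ R := fun g =>
        (Set.smul_set_mono Set.inter_subset_right).trans (hRi g).subset
      have hOR : O ∩ R = ⋃ g : G, g • C := by
        rw [hCdef, hOdef]
        simp_rw [Set.smul_set_inter, hRi]
        rw [Set.iUnion_inter]
      have hstabC : stabilizer G C = stabilizer G u := by
        rw [hust]
        ext g
        rw [mem_stabilizer_iff, mem_stabilizer_iff]
        exact hCstab g
      have hpiece : ∀ g : G, stabilizer G (g • C) = stabilizer G (g • u) := by
        intro g
        rw [stabilizer_smul_eq_stabilizer_map_conj, stabilizer_smul_eq_stabilizer_map_conj,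
          hstabC]
      -- the new pieces
      set N : Finset (Set T) := Finset.image (fun g : G => g • C) Finset.univ with hNdef
      have hmemN : ∀ U ∈ N, ∃ g : G, U = g • C := by
        intro U hU
        rw [hNdef, Finset.mem_image] at hU
        obtain ⟨g, _, h⟩ := hU
        exact ⟨g, h.symm⟩
      have hNQ' : ∀ U ∈ Q', ∀ W ∈ N, Disjoint U W := by
        intro U hU W hW
        obtain ⟨g, rfl⟩ := hmemN W hW
        exact Set.disjoint_of_subset (hQ'sub U hU) (hCsubO g) Set.disjoint_sdiff_left
      refine ⟨Q' ∪ N, ?_, ?_, ?_, ?_, ?_, ?_⟩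
      · intro U hU
        rcases Finset.mem_union.mp hU with h | h
        · exact hQ'1 U h
        · obtain ⟨g, rfl⟩ := hmemN U h
          exact ⟨hCne.smul_set, smul_isClopen hcont g hCco⟩
      · intro U hU W hW hne
        rcases Finset.mem_union.mp hU with h | h <;> rcases Finset.mem_union.mp hW with h' | h'
        · exact hQ'2 U h W h' hne
        · exact hNQ' U h W h'
        · exact (hNQ' W h' U h).symm
        · obtain ⟨g, rfl⟩ := hmemN U h
          obtain ⟨g', rfl⟩ := hmemN W h'
          by_contra hnd
          exact hne (hkey g g' hnd)
      · rw [Finset.set_biUnion_union, hQ'3]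
        have : (⋃ U ∈ N, U) = ⋃ g : G, g • C := by
          ext x
          simp only [hNdef, Set.mem_iUnion, Finset.mem_image, Finset.mem_coe]
          constructor
          · rintro ⟨U, ⟨g, _, rfl⟩, hx⟩
            exact ⟨g, hx⟩
          · rintro ⟨g, hx⟩
            exact ⟨g • C, ⟨g, Finset.mem_univ g, rfl⟩, hx⟩
        rw [this, ← hOR, hR'def, Set.inter_comm, Set.diff_union_inter]
      · intro U hU g
        rcases Finset.mem_union.mp hU with h | h
        · exact Finset.mem_union_left _ (hQ'4 U h g)
        · obtain ⟨g', rfl⟩ := hmemN U h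
          refine Finset.mem_union_right _ ?_
          rw [hNdef, Finset.mem_image]
          exact ⟨g * g', Finset.mem_univ _, (smul_smul g g' C).symm⟩
      · intro U hU
        rcases Finset.mem_union.mp hU with h | h
        · exact hQ'5 U h
        · obtain ⟨g, rfl⟩ := hmemN U h
          obtain ⟨W, hWP, hW⟩ := hVP t0 g
          exact ⟨W, hWP, (Set.smul_set_mono Set.inter_subset_left).trans hW⟩
      · intro U hU
        rcases Finset.mem_union.mp hU with h | h
        · exact hQ'6 U h
        · obtain ⟨g, rfl⟩ := hmemN U h
          exact ⟨g • u, Set.smul_mem_smul_set huC, hpiece g⟩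
    · -- no point of C has large stabilizer: discard t0
      refine ih (fun t ht => hL t (List.mem_cons_of_mem _ ht)) R hRc hRi hRle ?_
      rintro x ⟨hxR, hxcard⟩
      have hx := hcov ⟨hxR, hxcard⟩
      rw [Set.mem_iUnion₂] at hx
      obtain ⟨t, htL, hxt⟩ := hx
      rcases List.mem_cons.mp htL with rfl | htL'
      · exfalso
        rw [Set.mem_iUnion] at hxt
        obtain ⟨g, hg⟩ := hxt
        refine hCF ⟨g⁻¹ • x, ⟨Set.mem_smul_set_iff_inv_smul_mem.mp hg, hmemR g⁻¹ x hxR⟩, ?_⟩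
        rw [card_stab_smul]
        exact hxcard
      · exact Set.mem_biUnion htL' hxt

private lemma outer_lemma (hcont : ∀ g : G, Continuous fun t : T => g • t)
    {P : Finset (Set T)} (hP : IsPartition P) :
    ∀ n : ℕ, ∀ R : Set T, IsClopen R → (∀ g : G, g • R = R) →
      (∀ t ∈ R, Nat.card (stabilizer G t) ≤ n) → ∃ Q, GoodFam G P R Q := by
  classical
  obtain ⟨V, hVc, hVt, hVinv, hVdisj, hVP⟩ :
      ∃ V : T → Set T, (∀ t, IsClopen (V t)) ∧ (∀ t, t ∈ V t) ∧
        (∀ t, ∀ g : G, g • t = t → g • V t = V t) ∧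
        (∀ t, ∀ g : G, g • t ≠ t → Disjoint (g • V t) (V t)) ∧
        (∀ t, ∀ g : G, ∃ U ∈ P, g • V t ⊆ U) := by
    choose V h1 h2 h3 h4 h5 using exists_nbhd hcont hP
    exact ⟨V, h1, h2, h3, h4, h5⟩
  intro n
  induction n with
  | zero =>
    intro R hRc hRi hRle
    have hRempty : R = ∅ := by
      ext x
      simp only [Set.mem_empty_iff_false, iff_false]
      intro hx
      have h1 : 0 < Nat.card (stabilizer G x) := Nat.card_pos
      have h2 := hRle x hx
      omega
    exact ⟨∅, by simp, by simp, by simp [hRempty], by simp, by simp, by simp⟩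
  | succ n ihn =>
    intro R hRc hRi hRle
    haveI : Fintype G := Fintype.ofFinite G
    set K : Set T := {u ∈ R | n + 1 ≤ Nat.card (stabilizer G u)} with hKdef
    have hKclosed : IsClosed K := by
      have hKeq : K = R ∩ ⋃ H ∈ {H : Subgroup G | n + 1 ≤ Nat.card H},
          {x : T | ∀ g ∈ H, g • x = x} := by
        ext x
        simp only [hKdef, Set.mem_setOf_eq, Set.mem_inter_iff, Set.mem_iUnion, Set.mem_sep_iff]
        constructor
        · rintro ⟨hxR, hcard⟩
          exact ⟨hxR, stabilizer G x, hcard, fun g hg => hg⟩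
        · rintro ⟨hxR, H, hcard, hfix⟩
          refine ⟨hxR, le_trans hcard (Subgroup.card_le_of_le fun g hg => ?_)⟩
          exact hfix g hg
      rw [hKeq]
      refine hRc.isClosed.inter ?_
      refine Set.Finite.isClosed_biUnion (Set.toFinite _) fun H _ => ?_
      have : {x : T | ∀ g ∈ H, g • x = x} = ⋂ g ∈ (H : Set G), {x : T | g • x = x} := by
        ext x; simp
      rw [this]
      exact isClosed_biInter fun g _ => isClosed_eq (hcont g) continuous_id
    have hKcompact : IsCompact K := hKclosed.isCompact
    have hopen : ∀ i : K, IsOpen (⋃ g : G, g • V (i : T)) :=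
      fun i => isOpen_iUnion fun g => (smul_isClopen hcont g (hVc _)).isOpen
    have hsub : K ⊆ ⋃ i : K, ⋃ g : G, g • V (i : T) := by
      intro x hx
      rw [Set.mem_iUnion]
      refine ⟨⟨x, hx⟩, ?_⟩
      rw [Set.mem_iUnion]
      exact ⟨1, by rw [one_smul]; exact hVt x⟩
    obtain ⟨s, hs⟩ := hKcompact.elim_finite_subcover _ hopen hsub
    set L : List T := s.toList.map Subtype.val with hLdef
    have hLcard : ∀ t ∈ L, Nat.card (stabilizer G t) = n + 1 := by
      intro t ht
      rw [hLdef, List.mem_map] at ht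
      obtain ⟨i, _, rfl⟩ := ht
      exact le_antisymm (hRle _ i.2.1) i.2.2
    refine inner_lemma hcont hP V hVc hVt hVinv hVdisj hVP n ihn L hLcard R hRc hRi hRle ?_
    intro x hx
    have := hs hx
    rw [Set.mem_iUnion₂] at this
    obtain ⟨i, his, hxi⟩ := this
    exact Set.mem_biUnion (List.mem_map.mpr ⟨i, Finset.mem_toList.mpr his, rfl⟩) hxi


end Aux

/-- Let a finite group `G` act continuously on a profinite space `T` and let `P` be a
partition of `T`. Then there is a `G`-partition of `T` finer than `P` such that each of its
members `U` contains a point `t` with `Stab_G(U) = Stab_G(t)`. -/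
theorem exists_G_partition_with_point_stabilizers
    {G T : Type*} [Group G] [Finite G]
    [TopologicalSpace T] [CompactSpace T] [T2Space T] [TotallyDisconnectedSpace T]
    [MulAction G T] (hcont : ∀ g : G, Continuous fun t : T => g • t)
    (P : Finset (Set T)) (hP : IsPartition P) :
    ∃ Q : Finset (Set T), IsGPartition G Q ∧ Refines Q P ∧
      ∀ U ∈ Q, ∃ t ∈ U, MulAction.stabilizer G U = MulAction.stabilizer G t := by
  obtain ⟨Q, hQ⟩ := outer_lemma hcont hP (Nat.card G) Set.univ isClopen_univ
    (fun g => Set.smul_set_univ) (fun t _ => Subgroup.card_le_card_group _)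
  obtain ⟨hQ1, hQ2, hQ3, hQ4, hQ5, hQ6⟩ := hQ
  refine ⟨Q, ⟨⟨hQ1, hQ2, hQ3⟩, fun U hU g => ?_⟩, hQ5, hQ6⟩
  by_cases h : g • U = U
  · exact Or.inl h
  · exact Or.inr (hQ2 _ (hQ4 U hU g) _ hU h)
end

section
/- Let 𝐆 = (G,T) be a pile, let N₀ be an open normal subgroup of G, and let X be a partition of T. Then there exist a finite pile 𝐁 = (B,Y) and an epimorphism of piles ψ: 𝐆 → 𝐁 such that Ker(ψ) ≤ N₀ and the partition {ψ⁻¹(y) | y ∈ Y} of T is finer than X. -/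
open Pointwise

set_option linter.unusedSectionVars false
set_option maxHeartbeats 1000000

/-- A pile `(G,T)`: a profinite group `G`, a profinite space `T`, and a continuous action
of `G` on `T`. -/
structure Pile : Type 1 where
  G : Type
  T : Type
  [grp : Group G]
  [topG : TopologicalSpace G]
  [tgG : IsTopologicalGroup G]
  [cG : CompactSpace G]
  [h2G : T2Space G]
  [tdG : TotallyDisconnectedSpace G]
  [topT : TopologicalSpace T]
  [cT : CompactSpace T]
  [h2T : T2Space T]
  [tdT : TotallyDisconnectedSpace T]
  [act : MulAction G T]
  [csmul : ContinuousSMul G T]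

attribute [instance] Pile.grp Pile.topG Pile.tgG Pile.cG Pile.h2G Pile.tdG
  Pile.topT Pile.cT Pile.h2T Pile.tdT Pile.act Pile.csmul

/-- A pile is finite if both its group and its space are finite. -/
def Pile.IsFinite (P : Pile) : Prop := Finite P.G ∧ Finite P.T

/-- A morphism of piles: a continuous group homomorphism together with a continuous
equivariant map of the spaces. -/
structure PileHom (P Q : Pile) where
  toGrp : P.G →* Q.G
  contGrp : Continuous toGrp
  toSp : P.T → Q.T
  contSp : Continuous toSp
  equivariant : ∀ (g : P.G) (t : P.T), toSp (g • t) = toGrp g • toSp t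

/-- Composition of pile morphisms. -/
def PileHom.comp {P Q R : Pile} (g : PileHom Q R) (f : PileHom P Q) : PileHom P R where
  toGrp := g.toGrp.comp f.toGrp
  contGrp := g.contGrp.comp f.contGrp
  toSp := g.toSp ∘ f.toSp
  contSp := g.contSp.comp f.contSp
  equivariant := fun a t => by
    simp [Function.comp, f.equivariant, g.equivariant]

/-- A pile morphism is an epimorphism if it is surjective on groups and spaces and for
every point `x` of the target space there is a point `y` above it whose stabilizer maps
onto the stabilizer of `x`. -/
def PileHom.IsEpi {P Q : Pile} (f : PileHom P Q) : Prop :=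
  Function.Surjective f.toGrp ∧ Function.Surjective f.toSp ∧
  ∀ x : Q.T, ∃ y : P.T, f.toSp y = x ∧
    (MulAction.stabilizer P.G y).map f.toGrp = MulAction.stabilizer Q.G x

/-- The induced map of orbit spaces. -/
def PileHom.orbitMap {P Q : Pile} (f : PileHom P Q) :
    Quotient (MulAction.orbitRel P.G P.T) → Quotient (MulAction.orbitRel Q.G Q.T) :=
  Quotient.lift (fun t => Quotient.mk (MulAction.orbitRel Q.G Q.T) (f.toSp t))
    (fun t₁ t₂ h => Quotient.sound (by
      obtain ⟨g, hg⟩ := MulAction.mem_orbit_iff.mp h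
      exact MulAction.mem_orbit_iff.mpr ⟨f.toGrp g, by rw [← hg, f.equivariant]⟩))

/-- A pile morphism is a rigid epimorphism if it is an epimorphism, maps each point
stabilizer isomorphically onto the stabilizer of the image point, and induces a
homeomorphism of the orbit spaces. -/
def PileHom.IsRigid {P Q : Pile} (f : PileHom P Q) : Prop :=
  f.IsEpi ∧
  (∀ y : P.T, Set.InjOn f.toGrp (MulAction.stabilizer P.G y) ∧
    (MulAction.stabilizer P.G y).map f.toGrp = MulAction.stabilizer Q.G (f.toSp y)) ∧
  IsHomeomorph f.orbitMap

section Aux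

variable {G T : Type} [Group G] [TopologicalSpace G] [IsTopologicalGroup G]
  [CompactSpace G] [T2Space G] [TotallyDisconnectedSpace G]
  [TopologicalSpace T] [CompactSpace T] [T2Space T] [TotallyDisconnectedSpace T]
  [MulAction G T] [ContinuousSMul G T]

/-- The subgroup of elements moving `t` within its `N`-orbit, i.e. `N · Stab(t)`. -/
def stabN (N : Subgroup G) [hN : N.Normal] (t : T) : Subgroup G where
  carrier := {g | ∃ n ∈ N, g • t = n • t}
  one_mem' := ⟨1, N.one_mem, rfl⟩
  mul_mem' := by
    rintro g g' ⟨n, hn, hgn⟩ ⟨n', hn', hgn'⟩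
    refine ⟨g * n' * g⁻¹ * n, N.mul_mem (hN.conj_mem n' hn' g) hn, ?_⟩
    have e1 : (g * g') • t = (g * n') • t := by
      rw [mul_smul, mul_smul, hgn']
    have e2 : (g * n' * g⁻¹ * n) • t = (g * n' * g⁻¹) • (n • t) := (mul_smul _ _ _)
    rw [e1, e2, ← hgn, smul_smul]
    congr 1; group
  inv_mem' := by
    rintro g ⟨n, hn, hgn⟩
    refine ⟨g⁻¹ * n⁻¹ * g, hN.conj_mem' _ (N.inv_mem hn) g, ?_⟩
    have e1 := congrArg (fun y => (g⁻¹ * n⁻¹) • y) hgn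
    simp only [smul_smul] at e1
    -- e1 : (g⁻¹ * n⁻¹ * g) • t = (g⁻¹ * n⁻¹ * n) • t
    rw [e1]
    congr 1; group

variable {N : Subgroup G} [hNn : N.Normal]

lemma mem_stabN {t : T} {g : G} : g ∈ stabN N t ↔ ∃ n ∈ N, g • t = n • t := Iff.rfl

lemma N_le_stabN (t : T) : N ≤ stabN N t := fun n hn => ⟨n, hn, rfl⟩

lemma stab_le_stabN {t : T} {g : G} (h : g • t = t) : g ∈ stabN N t :=
  ⟨1, N.one_mem, by simp [h]⟩

lemma mem_stabN_congr {t : T} {g g' : G}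
    (h : (g : G ⧸ N) = (g' : G ⧸ N)) : g ∈ stabN N t ↔ g' ∈ stabN N t := by
  have hn : g⁻¹ * g' ∈ N := (QuotientGroup.eq).mp h
  constructor
  · intro hg
    have : g * (g⁻¹ * g') ∈ stabN N t := (stabN N t).mul_mem hg (N_le_stabN t hn)
    simpa using this
  · intro hg'
    have : g' * (g⁻¹ * g')⁻¹ ∈ stabN N t := (stabN N t).mul_mem hg' ((stabN N t).inv_mem (N_le_stabN t hn))
    simpa [mul_assoc] using this

lemma stabN_conj {t : T} (g g₁ : G) :
    g₁ ∈ stabN N (g • t) ↔ g⁻¹ * g₁ * g ∈ stabN N t := by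
  constructor
  · rintro ⟨n, hn, hg₁⟩
    refine ⟨g⁻¹ * n * g, hNn.conj_mem' n hn g, ?_⟩
    simp only [smul_smul] at hg₁
    calc (g⁻¹ * g₁ * g) • t = g⁻¹ • ((g₁ * g) • t) := by rw [smul_smul]; congr 1; group
    _ = g⁻¹ • ((n * g) • t) := by rw [hg₁]
    _ = (g⁻¹ * n * g) • t := by rw [smul_smul]; congr 1; group
  · rintro ⟨n, hn, hg₁⟩
    refine ⟨g * n * g⁻¹, hNn.conj_mem n hn g, ?_⟩
    simp only [smul_smul]
    calc (g₁ * g) • t = g • ((g⁻¹ * g₁ * g) • t) := by rw [smul_smul]; congr 1; group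
    _ = g • (n • t) := by rw [hg₁]
    _ = (g * n * g⁻¹ * g) • t := by rw [smul_smul]; congr 1; group

/-- A set is `N`-invariant. -/
def NInv (N : Subgroup G) (P : Set T) : Prop := ∀ n ∈ N, n • P = P

lemma NInv.smul_eq_of_mk_eq {P : Set T} (hP : NInv N P) {g g' : G}
    (h : (g : G ⧸ N) = (g' : G ⧸ N)) : g • P = g' • P := by
  have hn : g⁻¹ * g' ∈ N := (QuotientGroup.eq).mp h
  calc g • P = g • ((g⁻¹ * g') • P) := by rw [hP _ hn]
  _ = (g * (g⁻¹ * g')) • P := smul_smul _ _ _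
  _ = g' • P := by congr 1; group

lemma NInv.smul {P : Set T} (hP : NInv N P) (g : G) : NInv N (g • P) := by
  intro n hn
  have h : g⁻¹ * n * g ∈ N := hNn.conj_mem' n hn g
  calc n • g • P = (n * g) • P := smul_smul _ _ _
  _ = (g * (g⁻¹ * n * g)) • P := by congr 1; group
  _ = g • ((g⁻¹ * n * g) • P) := (smul_smul _ _ _).symm
  _ = g • P := by rw [hP _ h]

end Aux
section Aux2

variable {G T : Type} [Group G] [TopologicalSpace G] [IsTopologicalGroup G]
  [CompactSpace G] [T2Space G] [TotallyDisconnectedSpace G]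
  [TopologicalSpace T] [CompactSpace T] [T2Space T] [TotallyDisconnectedSpace T]
  [MulAction G T] [ContinuousSMul G T]

lemma IsPartition.exists_mem {X : Finset (Set T)} (hX : IsPartition X) (t : T) :
    ∃ U ∈ X, t ∈ U := by
  have := hX.2.2
  have ht : t ∈ ⋃ U ∈ X, U := by rw [this]; trivial
  simpa using ht

lemma IsPartition.eq_of_mem {X : Finset (Set T)} (hX : IsPartition X) {U V : Set T} {t : T}
    (hU : U ∈ X) (hV : V ∈ X) (htU : t ∈ U) (htV : t ∈ V) : U = V := by
  by_contra h
  exact (hX.2.1 U hU V hV h).ne_of_mem htU htV rfl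

lemma isClopen_smul {P : Set T} (hP : IsClopen P) (g : G) : IsClopen (g • P) :=
  ⟨hP.1.smul g, hP.2.smul g⟩

/-- Choice of a small open normal subgroup whose action preserves the pieces of `X`. -/
lemma exists_good_N (N₀ : Subgroup G) (hN₀n : N₀.Normal) (hN₀o : IsOpen (N₀ : Set G))
    (X : Finset (Set T)) (hX : IsPartition X) :
    ∃ N : Subgroup G, N.Normal ∧ IsOpen (N : Set G) ∧ N ≤ N₀ ∧
      ∀ n ∈ N, ∀ t : T, ∀ U ∈ X, t ∈ U → n • t ∈ U := by
  -- for each t, an open nbhd of 1 and of t keeping the piece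
  have key : ∀ t : T, ∃ V W : Set T, True := fun _ => ⟨∅, ∅, trivial⟩
  clear key
  have step : ∀ t : T, ∃ (V : Set G) (W : Set T) (U : Set T), U ∈ X ∧ IsOpen V ∧ (1 : G) ∈ V ∧
      IsOpen W ∧ t ∈ W ∧ W ⊆ U ∧ ∀ g ∈ V, ∀ s ∈ W, g • s ∈ U := by
    intro t
    obtain ⟨U, hU, htU⟩ := hX.exists_mem t
    have hUc : IsClopen U := (hX.1 U hU).2
    have hopen : IsOpen {p : G × T | p.1 • p.2 ∈ U} :=
      hUc.2.preimage continuous_smul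
    obtain ⟨V, W, hV, hW, h1V, htW, hVW⟩ :=
      isOpen_prod_iff.mp hopen 1 t (by simpa using htU)
    refine ⟨V, W ∩ U, U, hU, hV, h1V, hW.inter hUc.2, ⟨htW, htU⟩, Set.inter_subset_right,
      fun g hg s hs => hVW (Set.mk_mem_prod hg hs.1)⟩
  choose V W U hUX hVo h1V hWo htW hWU hkey using step
  have hcover : (Set.univ : Set T) ⊆ ⋃ t : T, W t := fun s _ =>
    Set.mem_iUnion.mpr ⟨s, htW s⟩
  obtain ⟨F, hF⟩ := isCompact_univ.elim_finite_subcover W hWo hcover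
  -- the open nbhd of 1
  set V₀ : Set G := (↑N₀ : Set G) ∩ ⋂ t ∈ F, V t with hV₀
  have hV₀o : IsOpen V₀ := hN₀o.inter (isOpen_biInter_finset (fun t _ => hVo t))
  have h1V₀ : (1 : G) ∈ V₀ := ⟨N₀.one_mem, by simp only [Set.mem_iInter]; exact fun t _ => h1V t⟩
  obtain ⟨C, hCc, h1C, hCV⟩ := compact_exists_isClopen_in_isOpen hV₀o h1V₀
  obtain ⟨H, hH⟩ := IsTopologicalGroup.exist_openNormalSubgroup_sub_clopen_nhds_of_one hCc h1C
  refine ⟨H.toOpenSubgroup.toSubgroup, H.isNormal', H.toOpenSubgroup.isOpen,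
    fun n hn => (hCV (hH hn)).1, ?_⟩
  intro n hn s Us hUs hsUs
  have hnV : ∀ t ∈ F, n ∈ V t := by
    have := (hCV (hH hn)).2
    simpa using this
  obtain ⟨t, htF, hst⟩ : ∃ t ∈ F, s ∈ W t := by
    have := hF (Set.mem_univ s)
    simpa using this
  have h1 : n • s ∈ U t := hkey t n (hnV t htF) s hst
  have h2 : s ∈ U t := hWU t hst
  have : Us = U t := hX.eq_of_mem hUs (hUX t) hsUs h2
  rw [this]; exact h1

end Aux2
section Aux3

variable {G T : Type} [Group G] [TopologicalSpace G] [IsTopologicalGroup G]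
  [CompactSpace G] [T2Space G] [TotallyDisconnectedSpace G]
  [TopologicalSpace T] [CompactSpace T] [T2Space T] [TotallyDisconnectedSpace T]
  [MulAction G T] [ContinuousSMul G T]

/-- The `G`-invariant refinement of a partition preserved by `N`. -/
lemma exists_refinement (N : Subgroup G) [hNn : N.Normal] (hNo : IsOpen (N : Set G))
    (X : Finset (Set T)) (hX : IsPartition X)
    (hNX : ∀ n ∈ N, ∀ t : T, ∀ U ∈ X, t ∈ U → n • t ∈ U) :
    ∃ Y : Finset (Set T), IsPartition Y ∧ (∀ P ∈ Y, ∃ U ∈ X, P ⊆ U) ∧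
      (∀ P ∈ Y, ∀ g : G, g • P ∈ Y) ∧ (∀ P ∈ Y, NInv N P) := by
  haveI : Finite (G ⧸ N) := Subgroup.quotient_finite_of_isOpen N hNo
  obtain ⟨pieceX, hmem, hin⟩ : ∃ p : T → Set T, (∀ t, p t ∈ X) ∧ (∀ t, t ∈ p t) := by
    choose p h1 h2 using fun t => hX.exists_mem t
    exact ⟨p, h1, h2⟩
  have piece_eq : ∀ {t : T} {U : Set T}, U ∈ X → t ∈ U → pieceX t = U :=
    fun {t U} hU htU => hX.eq_of_mem (hmem t) hU (hin t) htU
  -- membership shifting along N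
  have mem_shift : ∀ {m : G}, m ∈ N → ∀ {v : T} {P : Set T}, P ∈ X → m • v ∈ P → v ∈ P := by
    intro m hm v P hP hmv
    have h1 : m • v ∈ pieceX v := hNX m hm v _ (hmem v) (hin v)
    have : P = pieceX v := hX.eq_of_mem hP (hmem _) hmv h1
    rw [this]; exact hin v
  have pieceN : ∀ {m : G}, m ∈ N → ∀ t : T, pieceX (m • t) = pieceX t := by
    intro m hm t
    exact piece_eq (hmem t) (hNX m hm t _ (hmem t) (hin t))
  -- the atom map
  set F : (G ⧸ N → {U : Set T // U ∈ X}) → Set T :=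
    fun φ => ⋂ q : G ⧸ N, (Quotient.out q)⁻¹ • (φ q : Set T) with hF
  set f : T → (G ⧸ N → {U : Set T // U ∈ X}) :=
    fun x q => ⟨pieceX (Quotient.out q • x), hmem _⟩ with hf
  set A : T → Set T := fun x => F (f x) with hA
  have mem_A : ∀ {z x : T}, z ∈ A x ↔ ∀ q : G ⧸ N, Quotient.out q • z ∈ pieceX (Quotient.out q • x) := by
    intro z x
    simp only [hA, hF, hf, Set.mem_iInter]
    refine forall_congr' fun q => ?_
    rw [Set.mem_smul_set_iff_inv_smul_mem, inv_inv]
  have self_mem_A : ∀ x : T, x ∈ A x := fun x => mem_A.mpr fun q => hin _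
  have A_eq_of_mem : ∀ {z x : T}, z ∈ A x → A z = A x := by
    intro z x hz
    have hz' := mem_A.mp hz
    have hfz : f z = f x := by
      funext q
      exact Subtype.ext (piece_eq (hmem _) (hz' q))
    simp only [hA]
    rw [hfz]
  -- key equality for out of products
  have out_shift : ∀ (a : G), ∃ m ∈ N, Quotient.out (QuotientGroup.mk a : G ⧸ N) = a * m := by
    intro a
    refine ⟨a⁻¹ * Quotient.out (QuotientGroup.mk a : G ⧸ N), ?_, by group⟩
    rw [← QuotientGroup.eq]
    exact (QuotientGroup.out_eq' _).symm
  have piece_mk : ∀ {a b : G}, (a : G ⧸ N) = (b : G ⧸ N) → ∀ t : T, pieceX (a • t) = pieceX (b • t) := by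
    intro a b hab t
    have hm : b⁻¹ * a ∈ N := (QuotientGroup.eq).mp hab.symm
    have : a • t = (b * (b⁻¹ * a) * b⁻¹) • (b • t) := by
      rw [smul_smul]; congr 1; group
    rw [this, pieceN (hNn.conj_mem _ hm b)]
  have A_smul : ∀ (g : G) (x : T), g • A x = A (g • x) := by
    intro g x
    ext z
    rw [Set.mem_smul_set_iff_inv_smul_mem, mem_A, mem_A]
    constructor
    · intro h q
      -- use h at u := mk (out q * g)
      set u : G ⧸ N := QuotientGroup.mk (Quotient.out q * g) with hu
      obtain ⟨m, hm, hout⟩ := out_shift (Quotient.out q * g)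
      have h1 := h u
      rw [hout] at h1
      -- h1 : (out q * g * m) • (g⁻¹ • z) ∈ pieceX ((out q * g * m) • x)
      have e1 : (Quotient.out q * g * m) • (g⁻¹ • z) =
          ((Quotient.out q * g * m * g⁻¹ * (Quotient.out q)⁻¹)) • (Quotient.out q • z) := by
        simp only [smul_smul]; congr 1; group
      have hm2 : Quotient.out q * g * m * g⁻¹ * (Quotient.out q)⁻¹ ∈ N := by
        have : Quotient.out q * g * m * g⁻¹ * (Quotient.out q)⁻¹
            = (Quotient.out q * g) * m * (Quotient.out q * g)⁻¹ := by group
        rw [this]; exact hNn.conj_mem _ hm _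
      have e2 : pieceX ((Quotient.out q * g * m) • x) = pieceX ((Quotient.out q * g) • x) := by
        refine piece_mk ?_ x
        rw [QuotientGroup.eq]
        have : (Quotient.out q * g * m)⁻¹ * (Quotient.out q * g) = m⁻¹ := by group
        rw [this]; exact N.inv_mem hm
      rw [e1, e2] at h1
      have e3 : pieceX ((Quotient.out q * g) • x) = pieceX (Quotient.out q • (g • x)) := by
        rw [smul_smul]
      rw [e3] at h1
      exact mem_shift hm2 (hmem _) h1
    · intro h q
      obtain ⟨m, hm, hout⟩ := out_shift (Quotient.out q * g⁻¹)
      have h1 := h (QuotientGroup.mk (Quotient.out q * g⁻¹))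
      rw [hout] at h1
      have e2 : pieceX ((Quotient.out q * g⁻¹ * m) • (g • x)) = pieceX (Quotient.out q • x) := by
        rw [smul_smul]
        refine piece_mk ?_ x
        rw [QuotientGroup.eq]
        have : (Quotient.out q * g⁻¹ * m * g)⁻¹ * Quotient.out q = g⁻¹ * m⁻¹ * g := by group
        rw [this]
        exact hNn.conj_mem' _ (N.inv_mem hm) g
      rw [e2] at h1
      have hm4 : (Quotient.out q * g⁻¹) * m * (Quotient.out q * g⁻¹)⁻¹ ∈ N := hNn.conj_mem _ hm _
      have e3 : (Quotient.out q * g⁻¹ * m) • z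
          = ((Quotient.out q * g⁻¹) * m * (Quotient.out q * g⁻¹)⁻¹) • (Quotient.out q • (g⁻¹ • z)) := by
        simp only [smul_smul]; congr 1; group
      rw [e3] at h1
      exact mem_shift hm4 (hmem _) h1
  -- N-invariance
  have A_Ninv : ∀ x : T, NInv N (A x) := by
    intro x n hn
    rw [A_smul n x]
    have : n • x ∈ A x := by
      rw [mem_A]
      intro q
      have : Quotient.out q • (n • x) = (Quotient.out q * n * (Quotient.out q)⁻¹) • (Quotient.out q • x) := by
        simp only [smul_smul]; congr 1; group
      rw [this]
      exact hNX _ (hNn.conj_mem _ hn _) _ _ (hmem _) (hin _)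
    rw [A_eq_of_mem this]
  -- A x ⊆ pieceX x
  have A_sub : ∀ x : T, A x ⊆ pieceX x := by
    intro x z hz
    have h1 := mem_A.mp hz (QuotientGroup.mk 1)
    obtain ⟨m, hm, hout⟩ := out_shift (1 : G)
    rw [hout, one_mul] at h1
    -- h1 : m • z ∈ pieceX (m • x)
    rw [pieceN hm x] at h1
    exact mem_shift hm (hmem x) h1
  -- clopen
  have A_clopen : ∀ x : T, IsClopen (A x) := by
    intro x
    simp only [hA, hF]
    constructor
    · exact isClosed_iInter fun q => (isClopen_smul (hX.1 _ (hmem _)).2 _).1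
    · exact isOpen_iInter_of_finite fun q => (isClopen_smul (hX.1 _ (hmem _)).2 _).2
  -- finiteness of the range
  have hfin : (Set.range A).Finite := by
    have : Set.range A ⊆ Set.range F := by
      rintro _ ⟨x, rfl⟩; exact ⟨f x, rfl⟩
    exact (Set.finite_range F).subset this
  refine ⟨hfin.toFinset, ⟨?_, ?_, ?_⟩, ?_, ?_, ?_⟩
  · rintro P hP
    rw [Set.Finite.mem_toFinset] at hP
    obtain ⟨x, rfl⟩ := hP
    exact ⟨⟨x, self_mem_A x⟩, A_clopen x⟩
  · rintro P hP Q hQ hPQ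
    rw [Set.Finite.mem_toFinset] at hP hQ
    obtain ⟨x, rfl⟩ := hP
    obtain ⟨y, rfl⟩ := hQ
    rw [Set.disjoint_left]
    intro z hzx hzy
    exact hPQ ((A_eq_of_mem hzx).symm.trans (A_eq_of_mem hzy))
  · apply Set.eq_univ_of_forall
    intro x
    simp only [Set.mem_iUnion]
    exact ⟨A x, by rw [Set.Finite.mem_toFinset]; exact ⟨x, rfl⟩, self_mem_A x⟩
  · rintro P hP
    rw [Set.Finite.mem_toFinset] at hP
    obtain ⟨x, rfl⟩ := hP
    exact ⟨pieceX x, hmem x, A_sub x⟩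
  · rintro P hP g
    rw [Set.Finite.mem_toFinset] at hP ⊢
    obtain ⟨x, rfl⟩ := hP
    rw [A_smul g x]
    exact ⟨g • x, rfl⟩
  · rintro P hP
    rw [Set.Finite.mem_toFinset] at hP
    obtain ⟨x, rfl⟩ := hP
    exact A_Ninv x

end Aux3
section Aux4

variable {G T : Type} [Group G] [TopologicalSpace G] [IsTopologicalGroup G]
  [CompactSpace G] [T2Space G] [TotallyDisconnectedSpace G]
  [TopologicalSpace T] [CompactSpace T] [T2Space T] [TotallyDisconnectedSpace T]
  [MulAction G T] [ContinuousSMul G T]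

lemma exists_clopen_sep {K C : Set T} (hK : IsCompact K) (hC : IsClosed C) (hKC : K ∩ C = ∅) :
    ∃ A : Set T, IsClopen A ∧ K ⊆ A ∧ A ∩ C = ∅ := by
  have hsub : ∀ k : T, k ∈ K → ∃ V : Set T, IsClopen V ∧ k ∈ V ∧ V ⊆ Cᶜ := by
    intro k hk
    refine compact_exists_isClopen_in_isOpen hC.isOpen_compl ?_
    intro hkC
    exact absurd (Set.mem_inter hk hkC) (by rw [hKC]; exact Set.notMem_empty k)
  choose! V hVc hVk hVC using hsub
  obtain ⟨u, hu⟩ := hK.elim_finite_subcover (fun k : K => V k)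
    (fun k => (hVc k k.2).2) (fun z hz => Set.mem_iUnion.mpr ⟨⟨z, hz⟩, hVk z hz⟩)
  refine ⟨⋃ k ∈ u, V k, ?_, ?_, ?_⟩
  · refine ⟨?_, ?_⟩
    · exact isClosed_biUnion_finset (fun k _ => (hVc k k.2).1)
    · exact isOpen_biUnion (fun k _ => (hVc k k.2).2)
  · intro z hz
    have := hu hz
    simpa using this
  · rw [Set.eq_empty_iff_forall_notMem]
    rintro z ⟨hz1, hz2⟩
    simp only [Set.mem_iUnion] at hz1
    obtain ⟨k, _, hzk⟩ := hz1
    exact hVC k k.2 hzk hz2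

lemma iInter_clopen_eq {K : Set T} (hK : IsCompact K) :
    ⋂ A : {A : Set T // IsClopen A ∧ K ⊆ A}, (A : Set T) = K := by
  apply Set.Subset.antisymm
  · intro z hz
    by_contra hzK
    have hsep : K ∩ ({z} : Set T) = ∅ := by
      rw [Set.eq_empty_iff_forall_notMem]
      rintro y ⟨hy1, hy2⟩
      rw [Set.mem_singleton_iff] at hy2
      subst hy2
      exact hzK hy1
    obtain ⟨A, hAc, hKA, hAz⟩ := exists_clopen_sep hK isClosed_singleton hsep
    have hzA : z ∈ A := Set.mem_iInter.mp hz ⟨A, hAc, hKA⟩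
    rw [Set.eq_empty_iff_forall_notMem] at hAz
    exact hAz z ⟨hzA, Set.mem_singleton z⟩
  · intro z hz
    exact Set.mem_iInter.mpr fun A => A.2.2 hz

/-- The basic construction of a "chunk": a clopen `stabN`-invariant neighborhood of `x`
whose translates by elements outside `stabN N x` are disjoint from it. -/
lemma exists_chunk (N : Subgroup G) [hNn : N.Normal] (hNo : IsOpen (N : Set G))
    {D W : Set T} (hDc : IsClopen D) (hDinv : ∀ g : G, g • D = D)
    (hWc : IsClopen W) (hWinv : NInv N W)
    {x : T} (hxD : x ∉ D) (hxW : x ∈ W) :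
    ∃ U : Set T, x ∈ U ∧ IsClopen U ∧ U ⊆ W ∧ U ∩ D = ∅ ∧
      (∀ h ∈ stabN N x, h • U = U) ∧ (∀ g : G, g ∉ stabN N x → Disjoint (g • U) U) := by
  have hNcl : IsClosed (N : Set G) := OpenSubgroup.isClosed ⟨N, hNo⟩
  have hNcomp : IsCompact (N : Set G) := hNcl.isCompact
  set S : Subgroup G := stabN N x with hS
  have hSo : IsOpen (S : Set G) := Subgroup.isOpen_mono (N_le_stabN x) hNo
  haveI : Finite (G ⧸ S) := Subgroup.quotient_finite_of_isOpen S hSo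
  haveI : Finite (G ⧸ N) := Subgroup.quotient_finite_of_isOpen N hNo
  -- the compact orbit K
  set K : Set T := (N : Set G) • ({x} : Set T) with hK
  have memK : ∀ z : T, z ∈ K ↔ ∃ n ∈ N, n • x = z := by
    intro z
    simp only [hK, Set.mem_smul, Set.mem_singleton_iff]
    constructor
    · rintro ⟨n, hn, y, rfl, h⟩; exact ⟨n, hn, h⟩
    · rintro ⟨n, hn, h⟩; exact ⟨n, hn, x, rfl, h⟩
  have hxK : x ∈ K := (memK x).mpr ⟨1, N.one_mem, one_smul _ _⟩
  have hKcomp : IsCompact K := hNcomp.smul_set isCompact_singleton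
  have hKW : K ⊆ W := by
    intro z hz
    obtain ⟨n, hn, rfl⟩ := (memK z).mp hz
    rw [← hWinv n hn]
    exact Set.smul_mem_smul_set hxW
  have hKD : K ∩ D = ∅ := by
    rw [Set.eq_empty_iff_forall_notMem]
    rintro z ⟨hz1, hz2⟩
    obtain ⟨n, hn, rfl⟩ := (memK z).mp hz1
    apply hxD
    have : x ∈ n⁻¹ • D := Set.mem_smul_set_iff_inv_smul_mem.mpr (by simpa using hz2)
    rwa [hDinv n⁻¹] at this
  -- K is disjoint from its translates by elements outside S
  have hKtrans : ∀ g : G, g ∉ S → (g • K) ∩ K = ∅ := by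
    intro g hg
    rw [Set.eq_empty_iff_forall_notMem]
    rintro z ⟨hz1, hz2⟩
    obtain ⟨n', hn', rfl⟩ := (memK z).mp hz2
    rw [Set.mem_smul_set] at hz1
    obtain ⟨y, hy, hyz⟩ := hz1
    obtain ⟨n, hn, rfl⟩ := (memK y).mp hy
    apply hg
    have h1 : (g * n) • x = n' • x := by rw [mul_smul]; exact hyz
    have h2 : g * n ∈ S := ⟨n', hn', h1⟩
    have := S.mul_mem h2 (N_le_stabN x (N.inv_mem hn))
    simpa [mul_assoc] using this
  -- choose the basic clopen set A
  set ι : Type := {A : Set T // IsClopen A ∧ K ⊆ A} with hι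
  have hAfam : ∀ C : Set T, IsClosed C → K ∩ C = ∅ →
      ∃ A : Set T, IsClopen A ∧ K ⊆ A ∧ A ∩ C = ∅ := fun C hC hKC =>
    exists_clopen_sep hKcomp hC hKC
  -- for each bad coset, a clopen set separated from its translate
  have hbad : ∀ c : G ⧸ S, Quotient.out c ∉ S →
      ∃ A : Set T, IsClopen A ∧ K ⊆ A ∧ A ∩ (Quotient.out c • A) = ∅ := by
    intro c hc
    have hempty : (Set.univ : Set T) ∩ ⋂ A : ι, ((A : Set T) ∩ Quotient.out c • (A : Set T)) = ∅ := by
      rw [Set.univ_inter, Set.eq_empty_iff_forall_notMem]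
      intro z hz
      have h1 : z ∈ K := by
        rw [← iInter_clopen_eq hKcomp]
        exact Set.mem_iInter.mpr fun A => (Set.mem_iInter.mp hz A).1
      have h2 : z ∈ Quotient.out c • K := by
        rw [Set.mem_smul_set_iff_inv_smul_mem, ← iInter_clopen_eq hKcomp]
        refine Set.mem_iInter.mpr fun A => ?_
        have := (Set.mem_iInter.mp hz A).2
        rwa [Set.mem_smul_set_iff_inv_smul_mem] at this
      have := hKtrans (Quotient.out c) hc
      rw [Set.eq_empty_iff_forall_notMem] at this
      exact this z ⟨h2, h1⟩
    obtain ⟨u, hu⟩ := isCompact_univ.elim_finite_subfamily_closed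
      (fun A : ι => (A : Set T) ∩ Quotient.out c • (A : Set T))
      (fun A => (A.2.1.1).inter ((A.2.1.1).smul (Quotient.out c))) hempty
    refine ⟨⋂ A ∈ u, (A : Set T), ?_, ?_, ?_⟩
    · constructor
      · exact isClosed_biInter fun A _ => A.2.1.1
      · exact isOpen_biInter_finset fun A _ => A.2.1.2
    · exact Set.subset_iInter₂ fun A _ => A.2.2
    · rw [Set.univ_inter] at hu
      rw [Set.eq_empty_iff_forall_notMem]
      rintro z ⟨hz1, hz2⟩
      rw [Set.eq_empty_iff_forall_notMem] at hu
      apply hu z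
      refine Set.mem_iInter₂.mpr fun A hA => ⟨Set.mem_iInter₂.mp hz1 A hA, ?_⟩
      rw [Set.mem_smul_set_iff_inv_smul_mem]
      have h3 := Set.mem_smul_set_iff_inv_smul_mem.mp hz2
      have h4 : (Quotient.out c)⁻¹ • z ∈ ⋂ A ∈ u, (A : Set T) := by
        refine Set.mem_iInter₂.mpr fun B hB => ?_
        have := Set.mem_iInter₂.mp h3 B hB
        exact this
      exact Set.mem_iInter₂.mp h4 A hA
  classical
  -- choose the separating clopen sets
  choose! Abad hAbadc hKAbad hAbadsep using hbad
  set Abad' : G ⧸ S → Set T := fun c =>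
    if h : Quotient.out c ∈ S then Set.univ else Abad c with hAbad'
  have hAbad'c : ∀ c, IsClopen (Abad' c) := by
    intro c
    simp only [hAbad']
    split
    · exact isClopen_univ
    · exact hAbadc c (by assumption)
  have hKAbad' : ∀ c, K ⊆ Abad' c := by
    intro c
    simp only [hAbad']
    split
    · exact Set.subset_univ K
    · exact hKAbad c (by assumption)
  set V₀ : Set T := W ∩ Dᶜ with hV₀
  have hV₀o : IsOpen V₀ := hWc.2.inter hDc.1.isOpen_compl
  have hKV₀ : K ∩ V₀ᶜ = ∅ := by
    rw [Set.eq_empty_iff_forall_notMem]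
    rintro z ⟨hz1, hz2⟩
    rw [Set.eq_empty_iff_forall_notMem] at hKD
    exact hz2 ⟨hKW hz1, fun hzD => hKD z ⟨hz1, hzD⟩⟩
  obtain ⟨AV, hAVc, hKAV, hAVD⟩ := hAfam V₀ᶜ hV₀o.isClosed_compl hKV₀
  set A : Set T := AV ∩ ⋂ c : G ⧸ S, Abad' c with hA
  have hAc : IsClopen A := by
    refine hAVc.inter ⟨isClosed_iInter fun c => (hAbad'c c).1,
      isOpen_iInter_of_finite fun c => (hAbad'c c).2⟩
  have hKA : K ⊆ A := fun z hz =>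
    ⟨hKAV hz, Set.mem_iInter.mpr fun c => hKAbad' c hz⟩
  have hAV₀ : A ⊆ V₀ := by
    intro z hz
    by_contra hzV
    rw [Set.eq_empty_iff_forall_notMem] at hAVD
    exact hAVD z ⟨hz.1, hzV⟩
  have hAsep : ∀ c : G ⧸ S, Quotient.out c ∉ S → A ∩ (Quotient.out c • A) = ∅ := by
    intro c hc
    have h1 : A ⊆ Abad c := by
      intro z hz
      have := Set.mem_iInter.mp hz.2 c
      simpa only [hAbad', dif_neg hc] using this
    rw [Set.eq_empty_iff_forall_notMem]
    rintro z ⟨hz1, hz2⟩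
    have hsep := hAbadsep c hc
    rw [Set.eq_empty_iff_forall_notMem] at hsep
    refine hsep z ⟨h1 hz1, ?_⟩
    rw [Set.mem_smul_set_iff_inv_smul_mem] at hz2 ⊢
    exact h1 hz2
  -- the N-invariant core A'
  set A' : Set T := ⋂ n : (N : Set G), ((n : G)⁻¹ : G) • A with hA'
  have memA' : ∀ y : T, y ∈ A' ↔ ∀ n ∈ N, n • y ∈ A := by
    intro y
    simp only [hA', Set.mem_iInter]
    constructor
    · intro h n hn
      have := h ⟨n, hn⟩
      rwa [Set.mem_smul_set_iff_inv_smul_mem, inv_inv] at this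
    · intro h n
      rw [Set.mem_smul_set_iff_inv_smul_mem, inv_inv]
      exact h n n.2
  have hA'A : A' ⊆ A := by
    intro z hz
    have := (memA' z).mp hz 1 N.one_mem
    rwa [one_smul] at this
  have hKA' : K ⊆ A' := by
    intro z hz
    rw [memA']
    intro n hn
    obtain ⟨n₀, hn₀, rfl⟩ := (memK z).mp hz
    refine hKA ((memK _).mpr ⟨n * n₀, N.mul_mem hn hn₀, ?_⟩)
    rw [mul_smul]
  have hA'c : IsClopen A' := by
    constructor
    · exact isClosed_iInter fun n => hAc.1.smul _
    · rw [← isClosed_compl_iff]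
      have hcompl : A'ᶜ = (N : Set G) • Aᶜ := by
        ext y
        simp only [Set.mem_compl_iff, memA', not_forall]
        constructor
        · rintro ⟨n, hn, hny⟩
          refine Set.mem_smul.mpr ⟨n⁻¹, N.inv_mem hn, n • y, hny, ?_⟩
          simp
        · intro hy
          obtain ⟨n, hn, w, hw, rfl⟩ := Set.mem_smul.mp hy
          exact ⟨n⁻¹, N.inv_mem hn, by simpa using hw⟩
      rw [hcompl]
      exact (hNcomp.smul_set (hAc.2.isClosed_compl.isCompact)).isClosed
  have hA'Ninv : NInv N A' := by
    have key : ∀ n ∈ N, ∀ z ∈ A', n • z ∈ A' := by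
      intro n hn z hz
      rw [memA']
      intro m hm
      rw [smul_smul]
      exact (memA' z).mp hz _ (N.mul_mem hm hn)
    intro n hn
    apply Set.Subset.antisymm
    · rintro z ⟨w, hw, rfl⟩
      exact key n hn w hw
    · intro z hz
      refine ⟨n⁻¹ • z, key n⁻¹ (N.inv_mem hn) z hz, ?_⟩
      simp
  -- the chunk U
  set U : Set T := A' ∩ ⋂ q : {q : G ⧸ N // Quotient.out q ∈ S}, (Quotient.out q.1) • A' with hU
  have hUc : IsClopen U := by
    refine hA'c.inter ⟨isClosed_iInter fun q => hA'c.1.smul _,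
      isOpen_iInter_of_finite fun q => hA'c.2.smul _⟩
  have hUU' : U = ⋂ h ∈ (S : Set G), h • A' := by
    apply Set.Subset.antisymm
    · intro z hz
      refine Set.mem_iInter₂.mpr fun h hh => ?_
      have houtS : Quotient.out (QuotientGroup.mk h : G ⧸ N) ∈ S := by
        have hm : h⁻¹ * Quotient.out (QuotientGroup.mk h : G ⧸ N) ∈ N := by
          rw [← QuotientGroup.eq]
          exact (QuotientGroup.out_eq' _).symm
        have := S.mul_mem hh (N_le_stabN x hm)
        simpa [mul_assoc] using this
      have heq : h • A' = Quotient.out (QuotientGroup.mk h : G ⧸ N) • A' :=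
        hA'Ninv.smul_eq_of_mk_eq (QuotientGroup.out_eq' _).symm
      rw [heq]
      exact Set.mem_iInter.mp hz.2 ⟨QuotientGroup.mk h, houtS⟩
    · intro z hz
      constructor
      · have := Set.mem_iInter₂.mp hz 1 S.one_mem
        rwa [one_smul] at this
      · exact Set.mem_iInter.mpr fun q => Set.mem_iInter₂.mp hz _ q.2
  have hxU : x ∈ U := by
    rw [hUU']
    refine Set.mem_iInter₂.mpr fun h hh => ?_
    rw [Set.mem_smul_set_iff_inv_smul_mem]
    obtain ⟨n, hn, hinv⟩ := (S.inv_mem hh : h⁻¹ ∈ S)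
    rw [hinv]
    exact hKA' ((memK _).mpr ⟨n, hn, rfl⟩)
  have hUinv : ∀ h ∈ S, h • U = U := by
    have key : ∀ h ∈ S, h • U ⊆ U := by
      intro h hh
      rintro z ⟨w, hw, rfl⟩
      rw [hUU'] at hw ⊢
      refine Set.mem_iInter₂.mpr fun g hg => ?_
      have h1 : w ∈ (h⁻¹ * g) • A' := Set.mem_iInter₂.mp hw _ (S.mul_mem (S.inv_mem hh) hg)
      obtain ⟨v, hv, rfl⟩ := h1
      refine ⟨v, hv, ?_⟩
      simp only [smul_smul]
      congr 1
      group
    intro h hh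
    apply Set.Subset.antisymm (key h hh)
    intro z hz
    refine ⟨h⁻¹ • z, key h⁻¹ (S.inv_mem hh) ⟨z, hz, rfl⟩, ?_⟩
    simp
  have hUA : U ⊆ A := fun z hz => hA'A hz.1
  refine ⟨U, hxU, hUc, fun z hz => (hAV₀ (hUA hz)).1, ?_, hUinv, ?_⟩
  · rw [Set.eq_empty_iff_forall_notMem]
    rintro z ⟨hz1, hz2⟩
    exact (hAV₀ (hUA hz1)).2 hz2
  · intro g hg
    set c : G ⧸ S := QuotientGroup.mk g with hc
    have hmkout : (QuotientGroup.mk (Quotient.out c) : G ⧸ S) = c := QuotientGroup.out_eq' _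
    have hgc : (Quotient.out c)⁻¹ * g ∈ S := by
      rw [← QuotientGroup.eq, hmkout]
    have houtc : Quotient.out c ∉ S := by
      intro hmem
      exact hg (by simpa using S.mul_mem hmem hgc)
    have hgU : g • U = Quotient.out c • U := by
      have : g • U = Quotient.out c • (((Quotient.out c)⁻¹ * g) • U) := by
        rw [smul_smul]
        congr 1
        group
      rw [this, hUinv _ hgc]
    rw [Set.disjoint_iff_inter_eq_empty, hgU]
    have := hAsep c houtc
    rw [Set.eq_empty_iff_forall_notMem] at this ⊢
    rintro z ⟨hz1, hz2⟩
    refine this z ⟨hUA hz2, ?_⟩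
    rw [Set.mem_smul_set_iff_inv_smul_mem] at hz1 ⊢
    exact hUA hz1

end Aux4
section Aux5

variable {G T : Type} [Group G] [TopologicalSpace G] [IsTopologicalGroup G]
  [CompactSpace G] [T2Space G] [TotallyDisconnectedSpace G]
  [TopologicalSpace T] [CompactSpace T] [T2Space T] [TotallyDisconnectedSpace T]
  [MulAction G T] [ContinuousSMul G T]

/-- The number of `N`-cosets in `stabN N t`. -/
noncomputable def ordN (N : Subgroup G) [N.Normal] (t : T) : ℕ :=
  ((QuotientGroup.mk '' ((stabN N t : Set G))) : Set (G ⧸ N)).ncard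

variable {N : Subgroup G} [hNn : N.Normal]

lemma mem_ord_image {t : T} {q : G ⧸ N} :
    q ∈ QuotientGroup.mk '' ((stabN N t : Set G)) ↔ Quotient.out q ∈ stabN N t := by
  constructor
  · rintro ⟨g, hg, rfl⟩
    exact (mem_stabN_congr (QuotientGroup.out_eq' _)).mpr hg
  · intro h
    exact ⟨Quotient.out q, h, QuotientGroup.out_eq' _⟩

lemma stabN_eq_of_le_of_ord_le (hNo : IsOpen (N : Set G)) {z' z : T}
    (h : stabN N z' ≤ stabN N z) (hcard : ordN N z ≤ ordN N z') :
    stabN N z' = stabN N z := by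
  haveI : Finite (G ⧸ N) := Subgroup.quotient_finite_of_isOpen N hNo
  have himage : (QuotientGroup.mk '' ((stabN N z' : Set G)) : Set (G ⧸ N))
      = QuotientGroup.mk '' ((stabN N z : Set G)) := by
    apply Set.eq_of_subset_of_ncard_le (Set.image_mono h) hcard (Set.toFinite _)
  apply le_antisymm h
  intro g hg
  have : (QuotientGroup.mk g : G ⧸ N) ∈ (QuotientGroup.mk '' ((stabN N z' : Set G)) : Set (G ⧸ N)) := by
    rw [himage]; exact ⟨g, hg, rfl⟩
  obtain ⟨g', hg', hgg'⟩ := this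
  exact (mem_stabN_congr hgg').mp hg'

lemma one_le_ordN (hNo : IsOpen (N : Set G)) (t : T) : 1 ≤ ordN N t := by
  haveI : Finite (G ⧸ N) := Subgroup.quotient_finite_of_isOpen N hNo
  rw [Nat.one_le_iff_ne_zero, ← Nat.pos_iff_ne_zero]
  rw [ordN, Set.ncard_pos (Set.toFinite _)]
  exact ⟨QuotientGroup.mk 1, 1, (stabN N t).one_mem, rfl⟩

lemma ordN_le_card (hNo : IsOpen (N : Set G)) (t : T) : ordN N t ≤ Nat.card (G ⧸ N) := by
  haveI : Finite (G ⧸ N) := Subgroup.quotient_finite_of_isOpen N hNo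
  rw [← Set.ncard_univ]
  exact Set.ncard_le_ncard (Set.subset_univ _) Set.finite_univ

lemma isClosed_ordN_ge (hNo : IsOpen (N : Set G)) (k : ℕ) :
    IsClosed {t : T | k ≤ ordN N t} := by
  haveI : Finite (G ⧸ N) := Subgroup.quotient_finite_of_isOpen N hNo
  haveI : Fintype (G ⧸ N) := Fintype.ofFinite _
  have hNcl : IsClosed (N : Set G) := OpenSubgroup.isClosed ⟨N, hNo⟩
  haveI : CompactSpace (N : Set G) := isCompact_iff_compactSpace.mp hNcl.isCompact
  -- each basic condition set is closed
  have hC : ∀ q : G ⧸ N, IsClosed {t : T | Quotient.out q ∈ stabN N t} := by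
    intro q
    have heq : {t : T | Quotient.out q ∈ stabN N t} =
        Prod.snd '' {p : ↥(N : Set G) × T | (((p.1 : G))⁻¹ * Quotient.out q) • p.2 = p.2} := by
      ext t
      simp only [Set.mem_setOf_eq, Set.mem_image]
      constructor
      · rintro ⟨n, hn, hq⟩
        refine ⟨(⟨n, hn⟩, t), ?_, rfl⟩
        simp only [Set.mem_setOf_eq]
        rw [mul_smul, hq, ← mul_smul]
        simp
      · rintro ⟨⟨n, t'⟩, hp, rfl⟩
        simp only [Set.mem_setOf_eq] at hp
        refine ⟨(n : G), n.2, ?_⟩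
        have := congrArg (fun y => (n : G) • y) hp
        simpa [smul_smul] using this
    rw [heq]
    have hMc : IsClosed {p : ↥(N : Set G) × T | (((p.1 : G))⁻¹ * Quotient.out q) • p.2 = p.2} := by
      apply isClosed_eq
      · exact (continuous_smul.comp
          (((continuous_subtype_val.comp continuous_fst).inv.mul continuous_const).prodMk
            continuous_snd))
      · exact continuous_snd
    exact (hMc.isCompact.image continuous_snd).isClosed
  have heq : {t : T | k ≤ ordN N t} =
      ⋃ s : {s : Finset (G ⧸ N) // s.card = k}, ⋂ q ∈ s.1, {t : T | Quotient.out q ∈ stabN N t} := by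
    ext t
    simp only [Set.mem_setOf_eq, Set.mem_iUnion, Set.mem_iInter]
    constructor
    · intro hk
      obtain ⟨s, hs, hcard⟩ := Set.exists_subset_card_eq (n := k) (by rwa [ordN] at hk)
      have hsfin : s.Finite := (Set.toFinite _).subset hs
      refine ⟨⟨hsfin.toFinset, by rw [← hcard, Set.ncard_eq_toFinset_card _ hsfin]⟩, ?_⟩
      intro q hq
      rw [Set.Finite.mem_toFinset] at hq
      exact mem_ord_image.mp (hs hq)
    · rintro ⟨⟨s, hcard⟩, hsub⟩
      have h1 : (s : Set (G ⧸ N)) ⊆ QuotientGroup.mk '' ((stabN N t : Set G)) := by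
        intro q hq
        exact mem_ord_image.mpr (hsub q hq)
      calc k = (s : Set (G ⧸ N)).ncard := by rw [Set.ncard_coe_finset, hcard]
      _ ≤ _ := Set.ncard_le_ncard h1 (Set.toFinite _)
  rw [heq]
  exact isClosed_iUnion_of_finite fun s => isClosed_biInter fun q _ => hC q

end Aux5
section Aux6

variable {G T : Type} [Group G] [TopologicalSpace G] [IsTopologicalGroup G]
  [CompactSpace G] [T2Space G] [TotallyDisconnectedSpace G]
  [TopologicalSpace T] [CompactSpace T] [T2Space T] [TotallyDisconnectedSpace T]
  [MulAction G T] [ContinuousSMul G T]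

/-- Processing a finite list of chunks: carving out the orbit of each chunk in turn. -/
lemma stage_rec (N : Subgroup G) [hNn : N.Normal] (hNo : IsOpen (N : Set G))
    (Y : Finset (Set T)) (hYG : ∀ P ∈ Y, ∀ g : G, g • P ∈ Y) (Z : Set T) :
    ∀ (L : List (Set T × Subgroup G)) (D : Set T), IsClopen D → (∀ g : G, g • D = D) →
      (∀ p ∈ L, IsClopen p.1 ∧ (∃ U ∈ Y, p.1 ⊆ U) ∧
         (∀ h ∈ p.2, h • p.1 = p.1) ∧ (∀ g : G, g ∉ p.2 → Disjoint (g • p.1) p.1) ∧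
         N ≤ p.2 ∧ (∀ z, z ∈ p.1 → z ∈ Z → stabN N z = p.2)) →
      ∃ (D' : Set T) (𝒬 : Finset (Set T)),
        D ⊆ D' ∧ IsClopen D' ∧ (∀ g : G, g • D' = D') ∧
        (∀ p ∈ L, p.1 ∩ Z ⊆ D') ∧
        (⋃ P ∈ 𝒬, P) = D' \ D ∧
        (∀ P ∈ 𝒬, P.Nonempty ∧ IsClopen P) ∧
        (∀ P ∈ 𝒬, ∀ Q ∈ 𝒬, P ≠ Q → Disjoint P Q) ∧
        (∀ P ∈ 𝒬, ∃ U ∈ Y, P ⊆ U) ∧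
        (∀ P ∈ 𝒬, ∀ g : G, g • P ∈ 𝒬) ∧
        (∀ P ∈ 𝒬, NInv N P) ∧
        (∀ P ∈ 𝒬, ∃ t ∈ P, ∀ g : G, g • t ∈ P → g ∈ stabN N t) := by
  classical
  haveI : Finite (G ⧸ N) := Subgroup.quotient_finite_of_isOpen N hNo
  intro L
  induction L with
  | nil =>
    intro D hDc hDinv _
    refine ⟨D, ∅, le_refl _, hDc, hDinv, by simp, by simp, by simp, by simp, by simp, by simp,
      by simp, by simp⟩
  | cons p L ih =>
    intro D hDc hDinv hL
    obtain ⟨hUc, ⟨UY, hUY, hUUY⟩, hHinv, hHdisj, hNH, hstabZ⟩ := hL p (List.mem_cons_self)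
    set U : Set T := p.1 with hU
    set H : Subgroup G := p.2 with hH
    set P₀ : Set T := U \ D with hP₀
    by_cases hcase : P₀ ∩ Z = ∅
    · -- nothing new to cover here
      obtain ⟨D', 𝒬, h1, h2, h3, h4, h5, h6, h7, h8, h9, h10, h11⟩ :=
        ih D hDc hDinv (fun q hq => hL q (List.mem_cons_of_mem p hq))
      refine ⟨D', 𝒬, h1, h2, h3, ?_, h5, h6, h7, h8, h9, h10, h11⟩
      intro q hq
      rcases List.mem_cons.mp hq with rfl | hq'
      · rintro z ⟨hz1, hz2⟩
        by_cases hzD : z ∈ D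
        · exact h1 hzD
        · exfalso
          rw [Set.eq_empty_iff_forall_notMem] at hcase
          exact hcase z ⟨⟨hz1, hzD⟩, hz2⟩
      · exact h4 q hq'
    · -- there is a point of Z in P₀
      obtain ⟨z', hz'P₀, hz'Z⟩ : ∃ z', z' ∈ P₀ ∧ z' ∈ Z := by
        rw [Set.eq_empty_iff_forall_notMem] at hcase
        push_neg at hcase
        obtain ⟨z', hz'⟩ := hcase
        exact ⟨z', hz'.1, hz'.2⟩
      have hstab : stabN N z' = H := hstabZ z' hz'P₀.1 hz'Z
      have hP₀c : IsClopen P₀ := hUc.diff hDc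
      have hP₀H : ∀ h ∈ H, h • P₀ = P₀ := by
        intro h hh
        rw [hP₀, Set.smul_set_sdiff, hHinv h hh, hDinv h]
      have hP₀N : NInv N P₀ := fun n hn => hP₀H n (hNH hn)
      -- the orbit V of P₀
      set V : Set T := ⋃ q : G ⧸ N, Quotient.out q • P₀ with hV
      have hsubV : ∀ g : G, g • P₀ ⊆ V := by
        intro g
        have : g • P₀ = Quotient.out (QuotientGroup.mk g : G ⧸ N) • P₀ :=
          hP₀N.smul_eq_of_mk_eq (QuotientGroup.out_eq' _).symm
        rw [this]
        exact Set.subset_iUnion (fun q : G ⧸ N => Quotient.out q • P₀) _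
      have hP₀V : P₀ ⊆ V := by
        have := hsubV 1
        rwa [one_smul] at this
      have hVc : IsClopen V := by
        constructor
        · exact isClosed_iUnion_of_finite fun q => hP₀c.1.smul _
        · exact isOpen_iUnion fun q => hP₀c.2.smul _
      have hVinv : ∀ g : G, g • V = V := by
        have key : ∀ g : G, g • V ⊆ V := by
          rintro g z ⟨w, hw, rfl⟩
          obtain ⟨q, hq⟩ := Set.mem_iUnion.mp hw
          obtain ⟨v, hv, rfl⟩ := hq
          simp only [smul_smul]
          exact hsubV (g * Quotient.out q) (Set.smul_mem_smul_set hv)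
        intro g
        apply Set.Subset.antisymm (key g)
        intro z hz
        refine ⟨g⁻¹ • z, key g⁻¹ ⟨z, hz, rfl⟩, by simp⟩
      have hVD : V ∩ D = ∅ := by
        rw [Set.eq_empty_iff_forall_notMem]
        rintro z ⟨hz1, hz2⟩
        obtain ⟨q, hq⟩ := Set.mem_iUnion.mp hz1
        obtain ⟨v, hv, rfl⟩ := hq
        apply hv.2
        have : v ∈ (Quotient.out q)⁻¹ • D := Set.mem_smul_set_iff_inv_smul_mem.mpr (by simpa using hz2)
        rwa [hDinv] at this
      -- apply the induction hypothesis with the enlarged set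
      set D₁ : Set T := D ∪ V with hD₁
      have hD₁c : IsClopen D₁ := hDc.union hVc
      have hD₁inv : ∀ g : G, g • D₁ = D₁ := by
        intro g
        rw [hD₁, Set.smul_set_union, hDinv g, hVinv g]
      obtain ⟨D', 𝒬', h1, h2, h3, h4, h5, h6, h7, h8, h9, h10, h11⟩ :=
        ih D₁ hD₁c hD₁inv (fun q hq => hL q (List.mem_cons_of_mem p hq))
      -- the stage pieces
      have hfin : (Set.range fun q : G ⧸ N => Quotient.out q • P₀).Finite := Set.finite_range _
      set 𝒬s : Finset (Set T) := hfin.toFinset with h𝒬s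
      have mem𝒬s : ∀ Q : Set T, Q ∈ 𝒬s ↔ ∃ q : G ⧸ N, Quotient.out q • P₀ = Q := by
        intro Q
        rw [h𝒬s, Set.Finite.mem_toFinset, Set.mem_range]
      have hsmul_mem : ∀ g : G, g • P₀ ∈ 𝒬s := by
        intro g
        rw [mem𝒬s]
        exact ⟨QuotientGroup.mk g, (hP₀N.smul_eq_of_mk_eq (QuotientGroup.out_eq' _).symm).symm⟩
      have h𝒬sV : ∀ Q ∈ 𝒬s, Q ⊆ V := by
        intro Q hQ
        obtain ⟨q, rfl⟩ := (mem𝒬s Q).mp hQ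
        exact hsubV _
      have h𝒬'sub : ∀ Q ∈ 𝒬', Q ⊆ D' \ D₁ := by
        intro Q hQ
        rw [← h5]
        exact fun z hz => Set.mem_biUnion hQ hz
      -- disjointness of a translate of U from P₀-translates criterion
      have htrans : ∀ g₁ g₂ : G, ¬ Disjoint (g₁ • P₀) (g₂ • P₀) → g₁ • P₀ = g₂ • P₀ := by
        intro g₁ g₂ hnd
        have h12 : ¬ Disjoint ((g₂⁻¹ * g₁) • U) U := by
          intro hd
          apply hnd
          rw [Set.disjoint_left]
          rintro z ⟨w, hw, rfl⟩ hz2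
          obtain ⟨v, hv, hvz⟩ := hz2
          have hin : (g₂⁻¹ * g₁) • w ∈ (g₂⁻¹ * g₁) • U := Set.smul_mem_smul_set hw.1
          have hin2 : (g₂⁻¹ * g₁) • w ∈ U := by
            have h0 : (g₂⁻¹ * g₁) • w = g₂⁻¹ • (g₁ • w) := mul_smul _ _ _
            simp only [] at hvz
            rw [h0, ← hvz]
            have h1 : g₂⁻¹ • g₂ • v = v := by simp
            rw [h1]
            exact hv.1
          exact Set.disjoint_left.mp hd hin hin2
        have hmem : g₂⁻¹ * g₁ ∈ H := by
          by_contra hc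
          exact h12 (hHdisj _ hc)
        calc g₁ • P₀ = (g₂ * (g₂⁻¹ * g₁)) • P₀ := by congr 1; group
        _ = g₂ • ((g₂⁻¹ * g₁) • P₀) := (smul_smul _ _ _).symm
        _ = g₂ • P₀ := by rw [hP₀H _ hmem]
      refine ⟨D', 𝒬s ∪ 𝒬', ?_, h2, h3, ?_, ?_, ?_, ?_, ?_, ?_, ?_, ?_⟩
      · exact (Set.subset_union_left).trans h1
      · -- coverage
        intro q hq
        rcases List.mem_cons.mp hq with rfl | hq'
        · rintro z ⟨hz1, hz2⟩
          by_cases hzD : z ∈ D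
          · exact h1 (Set.mem_union_left _ hzD)
          · exact h1 (Set.mem_union_right _ (hP₀V ⟨hz1, hzD⟩))
        · exact h4 q hq'
      · -- union is D' \ D
        have hVD' : V ⊆ D' := fun z hz => h1 (Set.mem_union_right _ hz)
        have hsplit : D' \ D = V ∪ (D' \ D₁) := by
          ext z
          simp only [Set.mem_diff, Set.mem_union, hD₁]
          constructor
          · rintro ⟨hz1, hz2⟩
            by_cases hzV : z ∈ V
            · exact Or.inl hzV
            · exact Or.inr ⟨hz1, fun h => h.elim hz2 hzV⟩
          · rintro (hzV | ⟨hz1, hz2⟩)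
            · refine ⟨hVD' hzV, fun hzD => ?_⟩
              rw [Set.eq_empty_iff_forall_notMem] at hVD
              exact hVD z ⟨hzV, hzD⟩
            · exact ⟨hz1, fun h => hz2 (Set.mem_union_left _ h)⟩
        rw [hsplit, ← h5]
        apply Set.Subset.antisymm
        · intro z hz
          simp only [Set.mem_iUnion] at hz
          obtain ⟨Q, hQ, hzQ⟩ := hz
          rcases Finset.mem_union.mp hQ with hQs | hQ'
          · exact Set.mem_union_left _ (h𝒬sV Q hQs hzQ)
          · exact Set.mem_union_right _ (Set.mem_biUnion hQ' hzQ)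
        · rintro z (hzV | hz')
          · obtain ⟨q, hq⟩ := Set.mem_iUnion.mp hzV
            exact Set.mem_biUnion (Finset.mem_union_left _ ((mem𝒬s _).mpr ⟨q, rfl⟩)) hq
          · simp only [Set.mem_iUnion] at hz' ⊢
            obtain ⟨Q, hQ, hzQ⟩ := hz'
            exact ⟨Q, Finset.mem_union_right _ hQ, hzQ⟩
      · -- nonempty and clopen
        intro P hP
        rcases Finset.mem_union.mp hP with hPs | hP'
        · obtain ⟨q, rfl⟩ := (mem𝒬s P).mp hPs
          exact ⟨⟨Quotient.out q • z', Set.smul_mem_smul_set hz'P₀⟩, isClopen_smul hP₀c _⟩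
        · exact h6 P hP'
      · -- pairwise disjoint
        intro P hP Q hQ hPQ
        rcases Finset.mem_union.mp hP with hPs | hP' <;> rcases Finset.mem_union.mp hQ with hQs | hQ'
        · obtain ⟨q1, rfl⟩ := (mem𝒬s P).mp hPs
          obtain ⟨q2, rfl⟩ := (mem𝒬s Q).mp hQs
          by_contra hc
          exact hPQ (htrans _ _ hc)
        · obtain ⟨q1, rfl⟩ := (mem𝒬s P).mp hPs
          refine Set.disjoint_left.mpr fun z hz1 hz2 => ?_
          have := (h𝒬'sub Q hQ' hz2).2
          exact this (Set.mem_union_right _ (h𝒬sV _ hPs hz1))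
        · obtain ⟨q2, rfl⟩ := (mem𝒬s Q).mp hQs
          refine Set.disjoint_left.mpr fun z hz1 hz2 => ?_
          have := (h𝒬'sub P hP' hz1).2
          exact this (Set.mem_union_right _ (h𝒬sV _ hQs hz2))
        · exact h7 P hP' Q hQ' hPQ
      · -- inside a piece of Y
        intro P hP
        rcases Finset.mem_union.mp hP with hPs | hP'
        · obtain ⟨q, rfl⟩ := (mem𝒬s P).mp hPs
          refine ⟨Quotient.out q • UY, hYG UY hUY _, ?_⟩
          intro z hz
          obtain ⟨w, hw, rfl⟩ := hz
          exact Set.smul_mem_smul_set (hUUY hw.1)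
        · exact h8 P hP'
      · -- G-closed
        intro P hP g
        rcases Finset.mem_union.mp hP with hPs | hP'
        · obtain ⟨q, rfl⟩ := (mem𝒬s P).mp hPs
          have : g • Quotient.out q • P₀ = (g * Quotient.out q) • P₀ := smul_smul _ _ _
          rw [this]
          exact Finset.mem_union_left _ (hsmul_mem _)
        · exact Finset.mem_union_right _ (h9 P hP' g)
      · -- N-invariance
        intro P hP
        rcases Finset.mem_union.mp hP with hPs | hP'
        · obtain ⟨q, rfl⟩ := (mem𝒬s P).mp hPs
          exact hP₀N.smul _
        · exact h10 P hP'
      · -- anchors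
        intro P hP
        rcases Finset.mem_union.mp hP with hPs | hP'
        · obtain ⟨q, rfl⟩ := (mem𝒬s P).mp hPs
          refine ⟨Quotient.out q • z', Set.smul_mem_smul_set hz'P₀, ?_⟩
          intro g hg
          rw [stabN_conj]
          rw [hstab]
          -- (out q)⁻¹ * g * out q ∈ H
          set g₀ : G := (Quotient.out q)⁻¹ * g * Quotient.out q with hg₀
          have hmem : g₀ • z' ∈ P₀ := by
            obtain ⟨w, hw, hwz⟩ := hg
            -- g • (out q • z') = out q • w with w ∈ P₀
            have : g₀ • z' = (Quotient.out q)⁻¹ • (g • (Quotient.out q • z')) := by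
              simp only [smul_smul, hg₀]
              congr 1
              group
            rw [this, ← hwz]
            have : (Quotient.out q)⁻¹ • Quotient.out q • w = w := by simp
            rw [this]
            exact hw
          by_contra hc
          have hd := hHdisj g₀ hc
          exact Set.disjoint_left.mp hd (Set.smul_mem_smul_set hz'P₀.1) (hmem.1)
        · exact h11 P hP'

end Aux6
section Aux7

variable {G T : Type} [Group G] [TopologicalSpace G] [IsTopologicalGroup G]
  [CompactSpace G] [T2Space G] [TotallyDisconnectedSpace G]
  [TopologicalSpace T] [CompactSpace T] [T2Space T] [TotallyDisconnectedSpace T]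
  [MulAction G T] [ContinuousSMul G T]

lemma partition_step (N : Subgroup G) [hNn : N.Normal] (hNo : IsOpen (N : Set G))
    (Y : Finset (Set T)) (hY : IsPartition Y) (hYG : ∀ P ∈ Y, ∀ g : G, g • P ∈ Y)
    (hYN : ∀ P ∈ Y, NInv N P) :
    ∀ (k : ℕ) (D : Set T), IsClopen D → (∀ g : G, g • D = D) →
      (∀ x : T, x ∉ D → ordN N x ≤ k) →
      ∃ Part : Finset (Set T),
        (∀ P ∈ Part, P.Nonempty ∧ IsClopen P) ∧
        (∀ P ∈ Part, ∀ Q ∈ Part, P ≠ Q → Disjoint P Q) ∧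
        (⋃ P ∈ Part, P) = Dᶜ ∧
        (∀ P ∈ Part, ∃ U ∈ Y, P ⊆ U) ∧
        (∀ P ∈ Part, ∀ g : G, g • P ∈ Part) ∧
        (∀ P ∈ Part, NInv N P) ∧
        (∀ P ∈ Part, ∃ t ∈ P, ∀ g : G, g • t ∈ P → g ∈ stabN N t) := by
  classical
  intro k
  induction k with
  | zero =>
    intro D hDc hDinv hord
    have hD : Dᶜ = ∅ := by
      rw [Set.eq_empty_iff_forall_notMem]
      intro x hx
      have h1 := hord x hx
      have h2 := one_le_ordN hNo x
      omega
    exact ⟨∅, by simp, by simp, by simp [hD], by simp, by simp, by simp, by simp⟩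
  | succ k ih =>
    intro D hDc hDinv hord
    set Z : Set T := Dᶜ ∩ {t | k + 1 ≤ ordN N t} with hZ
    have hZclosed : IsClosed Z := hDc.2.isClosed_compl.inter (isClosed_ordN_ge hNo (k + 1))
    have hZcomp : IsCompact Z := hZclosed.isCompact
    -- for each z in Z, a chunk around it
    have hchunk : ∀ z : T, z ∈ Z → ∃ U : Set T, z ∈ U ∧ IsClopen U ∧ (∃ W ∈ Y, U ⊆ W) ∧
        U ∩ D = ∅ ∧ (∀ h ∈ stabN N z, h • U = U) ∧
        (∀ g : G, g ∉ stabN N z → Disjoint (g • U) U) := by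
      intro z hz
      obtain ⟨W, hWY, hzW⟩ := hY.exists_mem z
      obtain ⟨U, h1, h2, h3, h4, h5, h6⟩ := exists_chunk N hNo hDc hDinv
        (hY.1 W hWY).2 (hYN W hWY) hz.1 hzW
      exact ⟨U, h1, h2, ⟨W, hWY, h3⟩, h4, h5, h6⟩
    choose! Uz hUz1 hUz2 hUz3 hUz4 hUz5 hUz6 using hchunk
    -- key: on Uz ∩ Z the stabilizer group is constant
    have hconst : ∀ z : T, z ∈ Z → ∀ z₂, z₂ ∈ Uz z → z₂ ∈ Z → stabN N z₂ = stabN N z := by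
      intro z hz z₂ hz₂U hz₂Z
      have hle : stabN N z₂ ≤ stabN N z := by
        intro g hg
        obtain ⟨n, hn, hgz₂⟩ := hg
        by_contra hc
        have hd := hUz6 z hz g hc
        have hUNinv : n • Uz z = Uz z := hUz5 z hz n (N_le_stabN z hn)
        have h1 : g • z₂ ∈ g • Uz z := Set.smul_mem_smul_set hz₂U
        have h2 : g • z₂ ∈ Uz z := by
          rw [hgz₂, ← hUNinv]
          exact Set.smul_mem_smul_set hz₂U
        exact Set.disjoint_left.mp hd h1 h2
      apply stabN_eq_of_le_of_ord_le hNo hle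
      calc ordN N z ≤ k + 1 := hord z hz.1
      _ ≤ ordN N z₂ := hz₂Z.2
    -- finite subcover of Z
    have hcover : Z ⊆ ⋃ z : Z, Uz z := by
      intro z hz
      exact Set.mem_iUnion.mpr ⟨(⟨z, hz⟩ : Z), hUz1 z hz⟩
    obtain ⟨s, hs⟩ := hZcomp.elim_finite_subcover (fun z : Z => Uz z)
      (fun z => (hUz2 z z.2).2) hcover
    -- build the list and run the stage recursion
    set L : List (Set T × Subgroup G) := s.toList.map (fun z : ↑Z => (Uz ↑z, stabN N (↑z : T))) with hL
    have hLmem : ∀ p ∈ L, ∃ z : ↑Z, z ∈ s ∧ p = (Uz ↑z, stabN N (↑z : T)) := by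
      intro p hp
      rw [hL, List.mem_map] at hp
      obtain ⟨z, hz, rfl⟩ := hp
      exact ⟨z, (Finset.mem_toList).mp hz, rfl⟩
    have hLprop : ∀ p ∈ L, IsClopen p.1 ∧ (∃ U ∈ Y, p.1 ⊆ U) ∧
        (∀ h ∈ p.2, h • p.1 = p.1) ∧ (∀ g : G, g ∉ p.2 → Disjoint (g • p.1) p.1) ∧
        N ≤ p.2 ∧ (∀ z, z ∈ p.1 → z ∈ Z → stabN N z = p.2) := by
      intro p hp
      obtain ⟨z, hzs, rfl⟩ := hLmem p hp
      refine ⟨(hUz2 z z.2), hUz3 z z.2, hUz5 z z.2, hUz6 z z.2, N_le_stabN _, ?_⟩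
      intro z₂ hz₂U hz₂Z
      exact hconst z z.2 z₂ hz₂U hz₂Z
    obtain ⟨D', 𝒬s, hq1, hq2, hq3, hq4, hq5, hq6, hq7, hq8, hq9, hq10, hq11⟩ :=
      stage_rec N hNo Y hYG Z L D hDc hDinv hLprop
    have hZD' : Z ⊆ D' := by
      intro z hz
      have := hs hz
      simp only [Set.mem_iUnion] at this
      obtain ⟨z₀, hz₀s, hzU⟩ := this
      exact hq4 (Uz ↑z₀, stabN N (↑z₀ : T))
        (by rw [hL, List.mem_map]; exact ⟨z₀, Finset.mem_toList.mpr hz₀s, rfl⟩) ⟨hzU, hz⟩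
    -- recursive call
    have hord' : ∀ x : T, x ∉ D' → ordN N x ≤ k := by
      intro x hx
      by_contra hc
      push_neg at hc
      have hxZ : x ∈ Z := ⟨fun hxD => hx (hq1 hxD), hc⟩
      exact hx (hZD' hxZ)
    obtain ⟨Partr, hr1, hr2, hr3, hr4, hr5, hr6, hr7⟩ := ih D' hq2 hq3 hord'
    have hrsub : ∀ P ∈ Partr, P ⊆ D'ᶜ := by
      intro P hP
      rw [← hr3]
      exact fun z hz => Set.mem_biUnion hP hz
    have hssub : ∀ P ∈ 𝒬s, P ⊆ D' \ D := by
      intro P hP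
      rw [← hq5]
      exact fun z hz => Set.mem_biUnion hP hz
    refine ⟨𝒬s ∪ Partr, ?_, ?_, ?_, ?_, ?_, ?_, ?_⟩
    · intro P hP
      rcases Finset.mem_union.mp hP with h | h
      exacts [hq6 P h, hr1 P h]
    · intro P hP Q hQ hPQ
      rcases Finset.mem_union.mp hP with hP' | hP' <;> rcases Finset.mem_union.mp hQ with hQ' | hQ'
      · exact hq7 P hP' Q hQ' hPQ
      · exact Set.disjoint_left.mpr fun z hz1 hz2 => (hrsub Q hQ' hz2) (hssub P hP' hz1).1
      · exact Set.disjoint_left.mpr fun z hz1 hz2 => (hrsub P hP' hz1) (hssub Q hQ' hz2).1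
      · exact hr2 P hP' Q hQ' hPQ
    · apply Set.Subset.antisymm
      · intro z hz
        simp only [Set.mem_iUnion] at hz
        obtain ⟨P, hP, hzP⟩ := hz
        rcases Finset.mem_union.mp hP with h | h
        · exact (hssub P h hzP).2
        · intro hzD
          exact (hrsub P h hzP) (hq1 hzD)
      · intro z hz
        by_cases hzD' : z ∈ D'
        · have : z ∈ D' \ D := ⟨hzD', hz⟩
          rw [← hq5] at this
          simp only [Set.mem_iUnion] at this ⊢
          obtain ⟨P, hP, hzP⟩ := this
          exact ⟨P, Finset.mem_union_left _ hP, hzP⟩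
        · have : z ∈ D'ᶜ := hzD'
          rw [← hr3] at this
          simp only [Set.mem_iUnion] at this ⊢
          obtain ⟨P, hP, hzP⟩ := this
          exact ⟨P, Finset.mem_union_right _ hP, hzP⟩
    · intro P hP
      rcases Finset.mem_union.mp hP with h | h
      exacts [hq8 P h, hr4 P h]
    · intro P hP g
      rcases Finset.mem_union.mp hP with h | h
      exacts [Finset.mem_union_left _ (hq9 P h g), Finset.mem_union_right _ (hr5 P h g)]
    · intro P hP
      rcases Finset.mem_union.mp hP with h | h
      exacts [hq10 P h, hr6 P h]
    · intro P hP
      rcases Finset.mem_union.mp hP with h | h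
      exacts [hq11 P h, hr7 P h]

/-- The master partition lemma. -/
lemma main_partition (N : Subgroup G) [hNn : N.Normal] (hNo : IsOpen (N : Set G))
    (X : Finset (Set T)) (hX : IsPartition X)
    (hNX : ∀ n ∈ N, ∀ t : T, ∀ U ∈ X, t ∈ U → n • t ∈ U) :
    ∃ Part : Finset (Set T), IsPartition Part ∧
      (∀ P ∈ Part, ∃ U ∈ X, P ⊆ U) ∧
      (∀ P ∈ Part, ∀ g : G, g • P ∈ Part) ∧
      (∀ P ∈ Part, NInv N P) ∧
      (∀ P ∈ Part, ∃ t ∈ P, ∀ g : G, g • t ∈ P → g ∈ stabN N t) := by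
  obtain ⟨Y, hY, hYX, hYG, hYN⟩ := exists_refinement N hNo X hX hNX
  haveI : Finite (G ⧸ N) := Subgroup.quotient_finite_of_isOpen N hNo
  obtain ⟨Part, h1, h2, h3, h4, h5, h6, h7⟩ := partition_step N hNo Y hY hYG hYN
    (Nat.card (G ⧸ N)) ∅ isClopen_empty (fun g => by simp)
    (fun x _ => ordN_le_card hNo x)
  refine ⟨Part, ⟨h1, h2, by simpa using h3⟩, ?_, h5, h6, h7⟩
  intro P hP
  obtain ⟨U, hU, hPU⟩ := h4 P hP
  obtain ⟨V, hV, hUV⟩ := hYX U hU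
  exact ⟨V, hV, hPU.trans hUV⟩

end Aux7

/-- Let `(G,T)` be a pile, `N₀` an open normal subgroup of `G`, and `X` a partition of `T`.
Then there exist a finite pile `(B,Y)` and an epimorphism of piles `ψ : (G,T) → (B,Y)` with
`Ker ψ ≤ N₀` such that the partition of `T` by the fibers of `ψ` is finer than `X`. -/
theorem exists_finite_epi_refining_partition
    (P : Pile) (N₀ : Subgroup P.G) (hN₀n : N₀.Normal) (hN₀o : IsOpen (N₀ : Set P.G))
    (X : Finset (Set P.T)) (hX : IsPartition X) :
    ∃ B : Pile, B.IsFinite ∧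
      ∃ ψ : PileHom P B, ψ.IsEpi ∧ ψ.toGrp.ker ≤ N₀ ∧
        ∀ t t' : P.T, ψ.toSp t = ψ.toSp t' → ∀ U ∈ X, (t ∈ U ↔ t' ∈ U) := by
  classical
  obtain ⟨N, hNn, hNo, hNle, hNX⟩ := exists_good_N N₀ hN₀n hN₀o X hX
  haveI := hNn
  obtain ⟨Part, hPart, hPX, hPG, hPN, hPanchor⟩ := main_partition N hNo X hX hNX
  haveI hfinQ : Finite (P.G ⧸ N) := Subgroup.quotient_finite_of_isOpen N hNo
  obtain ⟨pc, hpcmem, hpcin⟩ : ∃ p : P.T → Set P.T, (∀ t, p t ∈ Part) ∧ (∀ t, t ∈ p t) := by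
    choose p h1 h2 using fun t => hPart.exists_mem t
    exact ⟨p, h1, h2⟩
  have pc_eq : ∀ {t : P.T} {U : Set P.T}, U ∈ Part → t ∈ U → pc t = U :=
    fun {t U} hU htU => hPart.eq_of_mem (hpcmem _) hU (hpcin _) htU
  -- the finite space
  letI Y : Type := {Q : Set P.T // Q ∈ Part}
  haveI hYfin : Finite Y := inferInstance
  -- topologies
  letI tQ : TopologicalSpace (P.G ⧸ N) := ⊥
  haveI dQ : DiscreteTopology (P.G ⧸ N) := ⟨rfl⟩
  letI tY : TopologicalSpace Y := ⊥
  haveI dY : DiscreteTopology Y := ⟨rfl⟩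
  haveI tgQ : IsTopologicalGroup (P.G ⧸ N) :=
    { continuous_mul := continuous_of_discreteTopology
      continuous_inv := continuous_of_discreteTopology }
  -- the action of the quotient on Y
  letI smulY : SMul (P.G ⧸ N) Y :=
    ⟨fun q y => Quotient.liftOn' q (fun g => (⟨g • y.1, hPG y.1 y.2 g⟩ : Y))
      (fun g g' h => Subtype.ext ((hPN y.1 y.2).smul_eq_of_mk_eq
        (QuotientGroup.eq.mpr (QuotientGroup.leftRel_apply.mp h))))⟩
  have smul_mk : ∀ (g : P.G) (y : Y),
      (QuotientGroup.mk g : P.G ⧸ N) • y = (⟨g • y.1, hPG y.1 y.2 g⟩ : Y) := fun g y => rfl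
  letI actY : MulAction (P.G ⧸ N) Y :=
    { toSMul := smulY
      one_smul := fun y => by
        rw [← QuotientGroup.mk_one, smul_mk]
        exact Subtype.ext (one_smul _ _)
      mul_smul := fun q1 q2 y => by
        refine Quotient.inductionOn₂' q1 q2 (fun g1 g2 => ?_)
        have h1 : (Quotient.mk'' g1 : P.G ⧸ N) = QuotientGroup.mk g1 := rfl
        have h2 : (Quotient.mk'' g2 : P.G ⧸ N) = QuotientGroup.mk g2 := rfl
        rw [h1, h2, ← QuotientGroup.mk_mul, smul_mk, smul_mk, smul_mk]
        exact Subtype.ext (mul_smul g1 g2 y.1) }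
  haveI csY : ContinuousSMul (P.G ⧸ N) Y := ⟨continuous_of_discreteTopology⟩
  -- continuity of the quotient map
  have contmk : Continuous (QuotientGroup.mk' N : P.G →* P.G ⧸ N) := by
    refine continuous_def.mpr fun s _ => ?_
    have hpre : (QuotientGroup.mk' N) ⁻¹' s
        = ⋃ g : ((QuotientGroup.mk' N) ⁻¹' s), (g : P.G) • (N : Set P.G) := by
      ext h
      simp only [Set.mem_iUnion]
      constructor
      · intro hh
        refine ⟨⟨h, hh⟩, ?_⟩
        refine Set.mem_smul_set.mpr ⟨1, N.one_mem, ?_⟩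
        simp [smul_eq_mul]
      · rintro ⟨⟨g, hg⟩, hmem⟩
        obtain ⟨n, hn, rfl⟩ := Set.mem_smul_set.mp hmem
        have : (QuotientGroup.mk' N) (g • n) = (QuotientGroup.mk' N) g := by
          simp only [smul_eq_mul, QuotientGroup.mk'_apply]
          rw [QuotientGroup.eq]
          simpa using hn
        rw [Set.mem_preimage, this]
        exact hg
    rw [hpre]
    exact isOpen_iUnion fun g => hNo.smul _
  -- continuity of the piece map
  have contSp : Continuous (fun t : P.T => (⟨pc t, hpcmem t⟩ : Y)) := by
    refine continuous_def.mpr fun s _ => ?_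
    have hpre : (fun t : P.T => (⟨pc t, hpcmem t⟩ : Y)) ⁻¹' s = ⋃ y : s, ((y : Y) : Set P.T) := by
      ext t
      simp only [Set.mem_preimage, Set.mem_iUnion]
      constructor
      · intro h
        exact ⟨⟨_, h⟩, hpcin t⟩
      · rintro ⟨⟨⟨Q, hQ⟩, hQs⟩, htQ⟩
        have heq : (⟨pc t, hpcmem t⟩ : Y) = ⟨Q, hQ⟩ := Subtype.ext (pc_eq hQ htQ)
        rw [heq]
        exact hQs
    rw [hpre]
    exact isOpen_iUnion fun y => (hPart.1 _ (y : Y).2).2.2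
  -- the finite pile
  refine ⟨{ G := P.G ⧸ N
            T := Y
            grp := inferInstance
            topG := tQ
            tgG := tgQ
            cG := Finite.compactSpace
            h2G := inferInstance
            tdG := inferInstance
            topT := tY
            cT := Finite.compactSpace
            h2T := inferInstance
            tdT := inferInstance
            act := actY
            csmul := csY }, ⟨hfinQ, hYfin⟩, ?_⟩
  -- the morphism
  have equivar : ∀ (g : P.G) (t : P.T),
      (⟨pc (g • t), hpcmem _⟩ : Y) = (QuotientGroup.mk g : P.G ⧸ N) • (⟨pc t, hpcmem t⟩ : Y) := by
    intro g t
    rw [smul_mk]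
    refine Subtype.ext ?_
    exact pc_eq (hPG _ (hpcmem t) g) (Set.smul_mem_smul_set (hpcin t))
  refine ⟨{ toGrp := QuotientGroup.mk' N
            contGrp := contmk
            toSp := fun t => (⟨pc t, hpcmem t⟩ : Y)
            contSp := contSp
            equivariant := fun g t => equivar g t }, ⟨?_, ?_, ?_⟩, ?_, ?_⟩
  · exact QuotientGroup.mk'_surjective N
  · rintro ⟨Q, hQ⟩
    obtain ⟨t, ht⟩ := (hPart.1 Q hQ).1
    exact ⟨t, Subtype.ext (pc_eq hQ ht)⟩
  · rintro ⟨Q, hQ⟩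
    obtain ⟨t, htQ, hanchor⟩ := hPanchor Q hQ
    refine ⟨t, Subtype.ext (pc_eq hQ htQ), ?_⟩
    apply le_antisymm
    · rintro q hq
      obtain ⟨g, hg, rfl⟩ := Subgroup.mem_map.mp hq
      rw [MulAction.mem_stabilizer_iff] at hg ⊢
      have : (QuotientGroup.mk' N) g = (QuotientGroup.mk g : P.G ⧸ N) := rfl
      rw [this, smul_mk]
      refine Subtype.ext ?_
      have h1 : g • t ∈ g • Q := Set.smul_mem_smul_set htQ
      rw [hg] at h1
      exact hPart.eq_of_mem (hPG Q hQ g) hQ h1 htQ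
    · rintro q hq
      obtain ⟨g, rfl⟩ := QuotientGroup.mk'_surjective N q
      rw [MulAction.mem_stabilizer_iff] at hq
      have hgQ : g • Q = Q := by
        have : (QuotientGroup.mk' N) g = (QuotientGroup.mk g : P.G ⧸ N) := rfl
        rw [this, smul_mk] at hq
        exact congrArg Subtype.val hq
      have hgt : g • t ∈ Q := by
        rw [← hgQ]
        exact Set.smul_mem_smul_set htQ
      obtain ⟨n, hn, hgn⟩ := hanchor g hgt
      refine Subgroup.mem_map.mpr ⟨n⁻¹ * g, ?_, ?_⟩
      · rw [MulAction.mem_stabilizer_iff, mul_smul, hgn, ← mul_smul]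
        simp
      · simp only [QuotientGroup.mk'_apply]
        rw [QuotientGroup.eq]
        have : (n⁻¹ * g)⁻¹ * g = g⁻¹ * n * g := by group
        rw [this]
        exact hNn.conj_mem' n hn g
  · intro g hg
    have : g ∈ N := by
      rw [MonoidHom.mem_ker, QuotientGroup.mk'_apply, QuotientGroup.eq_one_iff] at hg
      exact hg
    exact hNle this
  · intro t t' htt' U hU
    have hpc : pc t = pc t' := congrArg Subtype.val htt'
    obtain ⟨U₀, hU₀, hsub⟩ := hPX (pc t) (hpcmem t)
    constructor
    · intro htU
      have : U = U₀ := hX.eq_of_mem hU hU₀ htU (hsub (hpcin t))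
      rw [this]
      exact hsub (by rw [hpc]; exact hpcin t')
    · intro htU'
      have h2 : pc t' ⊆ U₀ := by rw [← hpc]; exact hsub
      have : U = U₀ := hX.eq_of_mem hU hU₀ htU' (h2 (hpcin t'))
      rw [this]
      exact hsub (hpcin t)
end
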